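/- arXiv:0709.2360 — 5 statements merged into one kernel-verified Lean document; each statement's English description precedes it below -/
import Mathlib

section
/- (Necessity part of Bernstein's theorem.) Let f(z) = Σ_{m=0}^∞ a_m z^m be a power series with complex coefficients and radius of convergence 1, and let Δ ∈ [0,1). If f has an immediate analytic continuation from the open unit disc to the arc I_Δ = {e^{iθ} : |θ| ≤ πΔ}, then there exist α > 0, a number b < 1 − Δ, and a function F holomorphic in the angle A(α) = {z ∈ ℂ : z ≠ 0, |arg z| < α} such that a_m = (−1)^m F(m) for every positive integer m, and limsup_{t→+∞} (log|F(t e^{iθ})|)/t ≤ πb|sin θ| for every θ with |θ| < α. -/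
open Filter MeasureTheory Set Topology

noncomputable section

/-- The sum of the power series `∑ a_m z^m`. -/
def powerSum (a : ℕ → ℂ) (z : ℂ) : ℂ := ∑' m, a m * z ^ m

/-- The power series `∑ a_m z^m` has radius of convergence 1:
`limsup |a_m|^{1/m} = 1`. -/
def RadiusOne (a : ℕ → ℂ) : Prop :=
  Filter.limsup (fun m : ℕ => ‖a m‖ ^ (1 / (m : ℝ))) Filter.atTop = 1

/-- Immediate analytic continuation of the power series `∑ a_m z^m` from the
open unit disc to the set `J`: an open set `U` containing the open unit disc
and `J`, and a holomorphic `g` on `U` agreeing with the sum on the disc. -/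
def ContinuesTo (a : ℕ → ℂ) (J : Set ℂ) : Prop :=
  ∃ U : Set ℂ, IsOpen U ∧ Metric.ball (0 : ℂ) 1 ⊆ U ∧ J ⊆ U ∧
    ∃ g : ℂ → ℂ, DifferentiableOn ℂ g U ∧
      ∀ z ∈ Metric.ball (0 : ℂ) 1, g z = powerSum a z

/-- The closed arc `I_Δ = {e^{iθ} : |θ| ≤ πΔ}`. -/
def arcI (D : ℝ) : Set ℂ :=
  {w : ℂ | ∃ θ : ℝ, |θ| ≤ Real.pi * D ∧ w = Complex.exp (θ * Complex.I)}

/-- A sign change of the real sequence `b` occurs at place `m`: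
`b m * b k < 0` for some `k < m` while `b j = 0` for `k < j < m`. -/
def SignChangeAt (b : ℕ → ℝ) (m : ℕ) : Prop :=
  ∃ k < m, b m * b k < 0 ∧ ∀ j, k < j → j < m → b j = 0

/-- The real sequence `j ↦ Re (e^{-iβ} a_j)`. -/
def rotRe (a : ℕ → ℂ) (β : ℝ) (j : ℕ) : ℝ :=
  (Complex.exp (-(β : ℂ) * Complex.I) * a j).re

/-- `n_{k,+}(r) = (1/m) card (Λ_{k,+} ∩ [m, (1+r)m])`, where `Λ_{k,+}` is the set of
integers in `[m, 2m]` where sign changes of `j ↦ Re (e^{-iβ} a_j)` occur. -/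
def nPlus (a : ℕ → ℂ) (β : ℝ) (m : ℕ) (r : ℝ) : ℝ :=
  (Set.ncard {j : ℕ | m ≤ j ∧ j ≤ 2 * m ∧ SignChangeAt (rotRe a β) j ∧
      (j : ℝ) ≤ (1 + r) * (m : ℝ)} : ℝ) / (m : ℝ)

/-- `n_{k,-}(r) = (1/m) card (Λ_{k,-} ∩ [(1-r)m, m])`, where `Λ_{k,-}` is the set of
integers in `[0, m]` where sign changes of `j ↦ Re (e^{-iβ} a_j)` occur. -/
def nMinus (a : ℕ → ℂ) (β : ℝ) (m : ℕ) (r : ℝ) : ℝ :=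
  (Set.ncard {j : ℕ | j ≤ m ∧ SignChangeAt (rotRe a β) j ∧
      (1 - r) * (m : ℝ) ≤ (j : ℝ)} : ℝ) / (m : ℝ)

/-- The gap analogue of `nPlus`: count nonzero coefficients instead of sign changes. -/
def nPlusGap (a : ℕ → ℂ) (m : ℕ) (r : ℝ) : ℝ :=
  (Set.ncard {j : ℕ | m ≤ j ∧ j ≤ 2 * m ∧ a j ≠ 0 ∧
      (j : ℝ) ≤ (1 + r) * (m : ℝ)} : ℝ) / (m : ℝ)

/-- The gap analogue of `nMinus`: count nonzero coefficients instead of sign changes. -/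
def nMinusGap (a : ℕ → ℂ) (m : ℕ) (r : ℝ) : ℝ :=
  (Set.ncard {j : ℕ | j ≤ m ∧ a j ≠ 0 ∧ (1 - r) * (m : ℝ) ≤ (j : ℝ)} : ℝ) / (m : ℝ)

/-- The lower `Δ`-regularization of `n` on the set `s`: the (pointwise) supremum of
all `C¹` minorants `φ` of `n` on `s` with `Δ ≤ φ' ≤ 1` on `s`. -/
def lowerRegOn (n : ℝ → ℝ) (D : ℝ) (s : Set ℝ) (x : ℝ) : ℝ :=
  sSup {y : ℝ | ∃ φ : ℝ → ℝ, ContDiffOn ℝ 1 φ s ∧ (∀ t ∈ s, φ t ≤ n t) ∧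
    (∀ t ∈ s, D ≤ derivWithin φ s t ∧ derivWithin φ s t ≤ 1) ∧ y = φ x}

/-- The lower `Δ`-regularization on the interval `[0, δ]`. -/
def lowerReg (n : ℝ → ℝ) (D δ : ℝ) : ℝ → ℝ := lowerRegOn n D (Set.Icc 0 δ)

/-- The upper `a`-regularization of `n` on the set `s`: the (pointwise) infimum of
all `C¹` majorants `φ` of `n` on `s` with `0 ≤ φ' ≤ a` on `s`. -/
def upperRegOn (n : ℝ → ℝ) (a : ℝ) (s : Set ℝ) (x : ℝ) : ℝ :=
  sInf {y : ℝ | ∃ φ : ℝ → ℝ, ContDiffOn ℝ 1 φ s ∧ (∀ t ∈ s, n t ≤ φ t) ∧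
    (∀ t ∈ s, 0 ≤ derivWithin φ s t ∧ derivWithin φ s t ≤ a) ∧ y = φ x}

/-- The upper `a`-regularization on the interval `[0, δ]`. -/
def upperReg (n : ℝ → ℝ) (a δ : ℝ) : ℝ → ℝ := upperRegOn n a (Set.Icc 0 δ)

/-- A (real-valued) function `u` is subharmonic on `s` if it is upper semicontinuous
on `s` and satisfies the sub-mean value inequality on all sufficiently small circles. -/
def SubharmonicOn (u : ℂ → ℝ) (s : Set ℂ) : Prop :=
  UpperSemicontinuousOn u s ∧
  ∀ z ∈ s, ∃ ε > 0, ∀ ρ : ℝ, 0 < ρ → ρ < ε →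
    u z ≤ (2 * Real.pi)⁻¹ *
      ∫ θ in (0 : ℝ)..2 * Real.pi, u (z + (ρ : ℂ) * Complex.exp ((θ : ℂ) * Complex.I))

/-- The Laplacian of a function `φ : ℂ → ℝ`, as the sum of the two second
partial derivatives (in the directions `1` and `I`). -/
def lap (φ : ℂ → ℝ) (z : ℂ) : ℝ :=
  fderiv ℝ (fun w => fderiv ℝ φ w 1) z 1 +
    fderiv ℝ (fun w => fderiv ℝ φ w Complex.I) z Complex.I

/-- `μ` is the Riesz measure of `u` on the open set `s`, i.e. `μ` is `(1/2π)` times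
the distributional Laplacian of `u`: for every smooth test function `φ` compactly
supported in `s`, `∫ u·Δφ = 2π ∫ φ dμ`. -/
def IsRieszMeasureOn (u : ℂ → ℝ) (s : Set ℂ) (μ : Measure ℂ) : Prop :=
  ∀ φ : ℂ → ℝ, ContDiff ℝ (⊤ : ℕ∞) φ → HasCompactSupport φ → tsupport φ ⊆ s →
    ∫ z, u z * lap φ z = 2 * Real.pi * ∫ z, φ z ∂μ

/-- The counting function `n(r, Λ) = card {λ ∈ Λ : λ ≤ r}` of a set of integers. -/
def countFun (Λ : Set ℕ) (r : ℝ) : ℝ := (Set.ncard {l : ℕ | l ∈ Λ ∧ (l : ℝ) ≤ r} : ℝ)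

/-- The maximum (Pólya) density
`D₂(Λ) = lim_{r→0+} limsup_{t→∞} (n((1+r)t, Λ) - n(t, Λ))/(rt)`
(the outer limit always exists, so it may be written as a `limsup`). -/
def maxDensity (Λ : Set ℕ) : ℝ :=
  Filter.limsup (fun r : ℝ =>
    Filter.limsup (fun t : ℝ => (countFun Λ ((1 + r) * t) - countFun Λ t) / (r * t))
      Filter.atTop) (𝓝[>] (0 : ℝ))

/-- The number of sign changes of the finite sequence `(a_0, …, a_N)`. -/
def signChangesUpTo (a : ℕ → ℝ) (N : ℕ) : ℕ :=
  Set.ncard {m : ℕ | m ≤ N ∧ SignChangeAt a m}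

/-- The order of vanishing of `f` at `x`: the least `k` with `f^{(k)}(x) ≠ 0`. -/
def vanishOrder (f : ℝ → ℝ) (x : ℝ) : ℕ :=
  sInf {k : ℕ | iteratedDeriv k f x ≠ 0}
/-!
Let `g` be the continuation of `f`. In the variable `s = log w`, the function
`F z = (2πi)⁻¹ ∫_γ g(e^s) e^{z(πi - s)} ds` interpolates `(-1)^m a_m`: the contour `γ`, taken over
`0 ≤ Im s ≤ 2π`, leaves the unit disc only over a sector `|arg w| ≤ β` with `πΔ < β` on which `g`
is still holomorphic, and at `z = m ∈ ℕ` the integrand is `2πi`-periodic in `s`, so Cauchy's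
theorem moves `γ` onto a full circle `|w| = e^ℓ < 1`, where Cauchy's formula for the coefficients
applies. For `z = t e^{iθ}` with `|θ|` small, the integrand is `O(exp(t((π - β)|sin θ| - ℓ cos θ)))`
on `γ`: on the outer arcs the decay `e^{-R Re z}` beats `e^{π |Im z|}`, and elsewhere
`|Im s - π| ≤ π - β`. Since `F` does not depend on `ℓ < 0`, letting `ℓ → 0` gives the bound with
`b = 1 - β/π < 1 - Δ`.
-/

namespace Bernstein

open Complex intervalIntegral
open scoped Real Interval

theorem differentiable_intervalIntegral_mul_cexp {K d : ℝ → ℂ} {a b : ℝ}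
    (hK : ContinuousOn K [[a, b]]) (hd : ContinuousOn d [[a, b]]) :
    Differentiable ℂ fun z : ℂ => ∫ t in a..b, K t * exp (z * d t) := by
  intro z₀
  obtain ⟨M, hM⟩ := isCompact_uIcc.exists_bound_of_continuousOn hK
  obtain ⟨C, hC⟩ := isCompact_uIcc.exists_bound_of_continuousOn hd
  have hcont : ∀ z : ℂ, ContinuousOn (fun t => K t * exp (z * d t)) [[a, b]] := by fun_prop
  have hcont' : ContinuousOn (fun t => K t * (d t * exp (z₀ * d t))) [[a, b]] := by fun_prop
  refine (hasDerivAt_integral_of_dominated_loc_of_deriv_le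
    (F' := fun z t => K t * (d t * exp (z * d t)))
    (bound := fun _ => M * (C * Real.exp ((‖z₀‖ + 1) * C))) (Metric.ball_mem_nhds z₀ one_pos)
    (.of_forall fun z => ((hcont z).mono uIoc_subset_uIcc).aestronglyMeasurable measurableSet_uIoc)
    (hcont z₀).intervalIntegrable
    ((hcont'.mono uIoc_subset_uIcc).aestronglyMeasurable measurableSet_uIoc)
    (.of_forall fun t ht z hz => ?_) intervalIntegrable_const
    (.of_forall fun t _ z _ => ?_)).2.differentiableAt
  · have ht := uIoc_subset_uIcc ht
    have hz : ‖z‖ ≤ ‖z₀‖ + 1 := by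
      linarith [norm_le_norm_add_norm_sub' z z₀, (mem_ball_iff_norm.1 hz).le]
    have hexp : ‖exp (z * d t)‖ ≤ Real.exp ((‖z₀‖ + 1) * C) := by
      rw [norm_exp]
      refine Real.exp_le_exp.2 ((re_le_norm _).trans ?_)
      rw [norm_mul]
      exact mul_le_mul hz (hC t ht) (norm_nonneg _) (by positivity)
    rw [norm_mul, norm_mul]
    have hC₀ : 0 ≤ C := (norm_nonneg _).trans (hC t ht)
    have hM₀ : 0 ≤ M := (norm_nonneg _).trans (hM t ht)
    gcongr
    exacts [hM t ht, hC t ht]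
  · simpa [mul_comm] using (((hasDerivAt_id z).mul_const (d t)).cexp).const_mul (K t)

theorem eventually_log_norm_div_le {E : Type*} [NormedAddCommGroup E] {u : ℝ → E} {C q ε : ℝ}
    (hq : 0 ≤ q) (hε : 0 < ε) (hu : ∀ᶠ t in atTop, ‖u t‖ ≤ C * Real.exp (q * t)) :
    ∀ᶠ t in atTop, Real.log ‖u t‖ / t ≤ q + ε := by
  filter_upwards [hu, eventually_gt_atTop 0, eventually_ge_atTop (Real.log C / ε)]
    with t hut ht hCt
  rw [div_le_iff₀ ht]
  rcases (norm_nonneg (u t)).eq_or_lt with h | h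
  · rw [← h, Real.log_zero]
    positivity
  · have hC : 0 < C := pos_of_mul_pos_left (h.trans_le hut) (Real.exp_pos _).le
    calc Real.log ‖u t‖ ≤ Real.log (C * Real.exp (q * t)) := Real.log_le_log h hut
      _ = Real.log C + q * t := by rw [Real.log_mul hC.ne' (Real.exp_pos _).ne', Real.log_exp]
      _ ≤ (q + ε) * t := by rw [div_le_iff₀ hε] at hCt; linarith

theorem exists_pos_forall_abs_lt_pi_mul_abs_sin_le {R : ℝ} (hR : 0 < R) :
    ∃ α > 0, ∀ θ : ℝ, |θ| < α → 0 ≤ Real.cos θ ∧ π * |Real.sin θ| ≤ R * Real.cos θ := by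
  have h : ∀ᶠ θ in 𝓝 (0 : ℝ), 0 < Real.cos θ ∧ π * |Real.sin θ| < R * Real.cos θ :=
    (continuousAt_const.eventually_lt Real.continuous_cos.continuousAt (by simp)).and
      ((by fun_prop : Continuous fun θ => π * |Real.sin θ|).continuousAt.eventually_lt
        (by fun_prop : Continuous fun θ => R * Real.cos θ).continuousAt (by simpa using hR))
  obtain ⟨α, hα, hθ⟩ := Metric.eventually_nhds_iff.1 h
  exact ⟨α, hα, fun θ hθα => by
    obtain ⟨h₁, h₂⟩ := hθ (by simpa [Real.dist_eq] using hθα)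
    exact ⟨h₁.le, h₂.le⟩⟩

section Segments

variable (f : ℂ → ℂ)

def vertIntegral (x a b : ℝ) : ℂ := I • ∫ y in a..b, f (x + y * I)

def horizIntegral (y a b : ℝ) : ℂ := ∫ x in a..b, f (x + y * I)

variable {f}

theorem boundary_rect_eq_zero_of_differentiableOn {x₁ x₂ y₁ y₂ : ℝ}
    (hf : DifferentiableOn ℂ f ([[x₁, x₂]] ×ℂ [[y₁, y₂]])) :
    horizIntegral f y₁ x₁ x₂ - horizIntegral f y₂ x₁ x₂ + vertIntegral f x₂ y₁ y₂ -
      vertIntegral f x₁ y₁ y₂ = 0 := by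
  simpa [horizIntegral, vertIntegral] using
    integral_boundary_rect_eq_zero_of_differentiableOn f (x₁ + y₁ * I) (x₂ + y₂ * I)
      (by simpa using hf)

theorem vertIntegral_add_adjacent {x a b c : ℝ}
    (hab : IntervalIntegrable (fun y : ℝ => f (x + y * I)) volume a b)
    (hbc : IntervalIntegrable (fun y : ℝ => f (x + y * I)) volume b c) :
    vertIntegral f x a b + vertIntegral f x b c = vertIntegral f x a c := by
  rw [vertIntegral, vertIntegral, vertIntegral, ← smul_add,
    integral_add_adjacent_intervals hab hbc]

theorem horizIntegral_add_adjacent {y a b c : ℝ}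
    (hab : IntervalIntegrable (fun x : ℝ => f (x + y * I)) volume a b)
    (hbc : IntervalIntegrable (fun x : ℝ => f (x + y * I)) volume b c) :
    horizIntegral f y a b + horizIntegral f y b c = horizIntegral f y a c :=
  integral_add_adjacent_intervals hab hbc

theorem intervalIntegrable_vert {S : Set ℂ} (hf : ContinuousOn f S) {x a b : ℝ}
    (hS : {x} ×ℂ [[a, b]] ⊆ S) :
    IntervalIntegrable (fun y : ℝ => f (x + y * I)) volume a b :=
  (hf.comp (by fun_prop) fun y hy => hS (by simpa [mem_reProdIm] using hy)).intervalIntegrable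

theorem intervalIntegrable_horiz {S : Set ℂ} (hf : ContinuousOn f S) {y a b : ℝ}
    (hS : [[a, b]] ×ℂ {y} ⊆ S) :
    IntervalIntegrable (fun x : ℝ => f (x + y * I)) volume a b :=
  (hf.comp (by fun_prop) fun x hx => hS (by simpa [mem_reProdIm] using hx)).intervalIntegrable

theorem norm_vertIntegral_le {x a b B : ℝ} (hf : ∀ s ∈ {x} ×ℂ [[a, b]], ‖f s‖ ≤ B) :
    ‖vertIntegral f x a b‖ ≤ B * |b - a| := by
  rw [vertIntegral, norm_smul, norm_I, one_mul]
  exact norm_integral_le_of_norm_le_const fun y hy =>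
    hf _ (by simpa [mem_reProdIm] using uIoc_subset_uIcc hy)

theorem norm_horizIntegral_le {y a b B : ℝ} (hf : ∀ s ∈ [[a, b]] ×ℂ {y}, ‖f s‖ ≤ B) :
    ‖horizIntegral f y a b‖ ≤ B * |b - a| :=
  norm_integral_le_of_norm_le_const fun x hx =>
    hf _ (by simpa [mem_reProdIm] using uIoc_subset_uIcc hx)

end Segments

section Bulge

def bulgeRegion (β R : ℝ) : Set ℂ :=
  {s | s.re < 0 ∨ s.re ≤ R ∧ (|s.im| ≤ β ∨ |s.im - 2 * π| ≤ β)}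

/- Under `w = exp s` this contour runs along the circle `|w| = exp R` for `arg w ∈ [-β, β]`,
along the circle `|w| = exp ℓ` for `arg w ∈ [β, 2π - β]`, and radially along `arg w = ±β`. -/
def bulgeIntegral (f : ℂ → ℂ) (β R ℓ : ℝ) : ℂ :=
  vertIntegral f R 0 β - horizIntegral f β ℓ R + vertIntegral f ℓ β (2 * π - β) +
    horizIntegral f (2 * π - β) ℓ R + vertIntegral f R (2 * π - β) (2 * π)

def bulgePath (β R ℓ : ℝ) : Set ℂ :=
  {R} ×ℂ ([[0, β]] ∪ [[2 * π - β, 2 * π]]) ∪ [[ℓ, R]] ×ℂ {β, 2 * π - β} ∪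
    {ℓ} ×ℂ [[β, 2 * π - β]]

variable {f : ℂ → ℂ} {β R ℓ : ℝ}

theorem reProdIm_subset_bulgeRegion_of_neg {A B : Set ℝ} (hA : ∀ x ∈ A, x < 0) :
    A ×ℂ B ⊆ bulgeRegion β R :=
  fun _ hs => Or.inl (hA _ hs.1)

theorem uIcc_reProdIm_subset_bulgeRegion {B : Set ℝ} (hℓ : ℓ < 0)
    (hB : ∀ y ∈ B, |y| ≤ β ∨ |y - 2 * π| ≤ β) : [[ℓ, R]] ×ℂ B ⊆ bulgeRegion β R := by
  intro s ⟨hre, him⟩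
  rcases lt_or_ge s.re 0 with h | h
  · exact Or.inl h
  · exact Or.inr ⟨(le_max_iff.1 hre.2).resolve_left (by linarith), hB _ him⟩

theorem lowerRect_subset_bulgeRegion (hβ : 0 ≤ β) (hℓ : ℓ < 0) :
    [[ℓ, R]] ×ℂ [[0, β]] ⊆ bulgeRegion β R :=
  uIcc_reProdIm_subset_bulgeRegion hℓ fun y hy =>
    Or.inl (by simpa [abs_of_nonneg hβ] using abs_sub_left_of_mem_uIcc hy)

theorem upperRect_subset_bulgeRegion (hβ : 0 ≤ β) (hℓ : ℓ < 0) :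
    [[ℓ, R]] ×ℂ [[2 * π - β, 2 * π]] ⊆ bulgeRegion β R :=
  uIcc_reProdIm_subset_bulgeRegion hℓ fun y hy =>
    Or.inr (by simpa [abs_sub_comm, abs_of_nonneg hβ] using abs_sub_right_of_mem_uIcc hy)

theorem radialRect_subset_bulgeRegion (hβ : 0 ≤ β) (hℓ : ℓ < 0) :
    [[ℓ, R]] ×ℂ {β, 2 * π - β} ⊆ bulgeRegion β R :=
  uIcc_reProdIm_subset_bulgeRegion hℓ fun y hy => by
    rcases hy with rfl | rfl
    · exact .inl (abs_of_nonneg hβ).le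
    · exact .inr (by simp [abs_of_nonneg hβ])

theorem bulgePath_subset_bulgeRegion (hβ : 0 ≤ β) (hℓ : ℓ < 0) :
    bulgePath β R ℓ ⊆ bulgeRegion β R := by
  rintro s ((⟨hre, him | him⟩ | hs) | ⟨hre, -⟩)
  · exact lowerRect_subset_bulgeRegion hβ hℓ ⟨by simp_all, him⟩
  · exact upperRect_subset_bulgeRegion hβ hℓ ⟨by simp_all, him⟩
  · exact radialRect_subset_bulgeRegion hβ hℓ hs
  · exact Or.inl (by simp_all)

theorem bulgeIntegral_eq_vertIntegral_add (hf : DifferentiableOn ℂ f (bulgeRegion β R))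
    (hβ : 0 ≤ β) (hℓ : ℓ < 0) :
    bulgeIntegral f β R ℓ =
      vertIntegral f ℓ 0 (2 * π) + horizIntegral f (2 * π) ℓ R - horizIntegral f 0 ℓ R := by
  have hline : ∀ a b : ℝ, IntervalIntegrable (fun y : ℝ => f (ℓ + y * I)) volume a b :=
    fun a b => intervalIntegrable_vert hf.continuousOn
      (reProdIm_subset_bulgeRegion_of_neg (by simpa using hℓ))
  have hlower := boundary_rect_eq_zero_of_differentiableOn
    (hf.mono (lowerRect_subset_bulgeRegion hβ hℓ))
  have hupper := boundary_rect_eq_zero_of_differentiableOn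
    (hf.mono (upperRect_subset_bulgeRegion hβ hℓ))
  rw [bulgeIntegral]
  linear_combination hlower + hupper + vertIntegral_add_adjacent (hline 0 β) (hline β (2 * π - β))
    + vertIntegral_add_adjacent (hline 0 (2 * π - β)) (hline (2 * π - β) (2 * π))

theorem bulgeIntegral_eq_of_neg (hf : DifferentiableOn ℂ f (bulgeRegion β R))
    (hβ : 0 ≤ β) {ℓ' : ℝ} (hℓ : ℓ < 0) (hℓ' : ℓ' < 0) :
    bulgeIntegral f β R ℓ = bulgeIntegral f β R ℓ' := by
  have hneg : ∀ x ∈ [[ℓ', ℓ]], x < 0 := fun x hx => hx.2.trans_lt (max_lt hℓ' hℓ)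
  have hradial : ∀ y ∈ ({β, 2 * π - β} : Set ℝ),
      IntervalIntegrable (fun x : ℝ => f (x + y * I)) volume ℓ' ℓ ∧
        IntervalIntegrable (fun x : ℝ => f (x + y * I)) volume ℓ R := fun y hy =>
    ⟨intervalIntegrable_horiz hf.continuousOn (reProdIm_subset_bulgeRegion_of_neg hneg),
      intervalIntegrable_horiz hf.continuousOn
        ((reProdIm_subset_iff'.2 (.inl ⟨subset_rfl, singleton_subset_iff.2 hy⟩)).trans
          (radialRect_subset_bulgeRegion hβ hℓ))⟩
  obtain ⟨hβ₁, hβ₂⟩ := hradial β (.inl rfl)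
  obtain ⟨hβ'₁, hβ'₂⟩ := hradial (2 * π - β) (.inr rfl)
  have hrect := boundary_rect_eq_zero_of_differentiableOn
    (hf.mono (reProdIm_subset_bulgeRegion_of_neg (B := [[β, 2 * π - β]]) hneg))
  rw [bulgeIntegral, bulgeIntegral]
  linear_combination hrect - horizIntegral_add_adjacent hβ₁ hβ₂ +
    horizIntegral_add_adjacent hβ'₁ hβ'₂

theorem segments_subset_bulgePath :
    {R} ×ℂ [[0, β]] ⊆ bulgePath β R ℓ ∧ [[ℓ, R]] ×ℂ {β} ⊆ bulgePath β R ℓ ∧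
      {ℓ} ×ℂ [[β, 2 * π - β]] ⊆ bulgePath β R ℓ ∧
      [[ℓ, R]] ×ℂ {2 * π - β} ⊆ bulgePath β R ℓ ∧
      {R} ×ℂ [[2 * π - β, 2 * π]] ⊆ bulgePath β R ℓ :=
  ⟨fun _ ⟨hre, him⟩ => Or.inl (Or.inl ⟨hre, Or.inl him⟩),
    fun _ ⟨hre, him⟩ => Or.inl (Or.inr ⟨hre, Or.inl him⟩),
    fun _ hs => Or.inr hs,
    fun _ ⟨hre, him⟩ => Or.inl (Or.inr ⟨hre, Or.inr him⟩),
    fun _ ⟨hre, him⟩ => Or.inl (Or.inl ⟨hre, Or.inr him⟩)⟩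

theorem norm_bulgeIntegral_le {B : ℝ} (hβ₀ : 0 ≤ β) (hβ : β ≤ π) (hℓR : ℓ ≤ R)
    (hB : ∀ s ∈ bulgePath β R ℓ, ‖f s‖ ≤ B) :
    ‖bulgeIntegral f β R ℓ‖ ≤ B * (2 * π + 2 * (R - ℓ)) := by
  obtain ⟨h₁, h₂, h₃, h₄, h₅⟩ := segments_subset_bulgePath (β := β) (R := R) (ℓ := ℓ)
  have h₁ := norm_vertIntegral_le fun s hs => hB s (h₁ hs)
  have h₂ := norm_horizIntegral_le fun s hs => hB s (h₂ hs)
  have h₃ := norm_vertIntegral_le fun s hs => hB s (h₃ hs)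
  have h₄ := norm_horizIntegral_le fun s hs => hB s (h₄ hs)
  have h₅ := norm_vertIntegral_le fun s hs => hB s (h₅ hs)
  rw [abs_of_nonneg (by linarith)] at h₁ h₂ h₃ h₄ h₅
  rw [bulgeIntegral]
  grw [norm_add_le, norm_add_le, norm_add_le, norm_sub_le]
  linarith

theorem exists_mapsTo_exp_bulgeRegion {U : Set ℂ} {D : ℝ} (hU : IsOpen U)
    (hball : Metric.ball (0 : ℂ) 1 ⊆ U) (harc : arcI D ⊆ U) (hD₀ : 0 ≤ D) (hD₁ : D < 1) :
    ∃ β R : ℝ, π * D < β ∧ β ≤ π ∧ 0 < R ∧ MapsTo exp (bulgeRegion β R) U := by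
  have hK : (fun y : ℝ => (y : ℂ) * I) '' Icc (-(π * D)) (π * D) ⊆ exp ⁻¹' U := by
    rintro _ ⟨y, hy, rfl⟩
    exact harc ⟨y, abs_le.2 hy, rfl⟩
  obtain ⟨δ, hδ, hthick⟩ := (isCompact_Icc.image (by fun_prop)).exists_thickening_subset_open
    (hU.preimage continuous_exp) hK
  have hπD : 0 ≤ π * D := by positivity
  have hstrip : ∀ s : ℂ, s.re ≤ δ / 3 → |s.im| ≤ π * D + δ / 3 → exp s ∈ U := by
    intro s hre him
    rcases lt_or_ge s.re 0 with hneg | hpos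
    · exact hball (by simpa [norm_exp] using hneg)
    obtain ⟨him₁, him₂⟩ := abs_le.1 him
    set c := max (-(π * D)) (min s.im (π * D))
    have hc : c ∈ Icc (-(π * D)) (π * D) :=
      ⟨le_max_left _ _, max_le (by linarith) (min_le_right _ _)⟩
    have hc₁ : c ≤ s.im + δ / 3 := max_le (by linarith) ((min_le_left _ _).trans (by linarith))
    have hc₂ : s.im - δ / 3 ≤ c := (le_min (by linarith) (by linarith)).trans (le_max_right _ _)
    have hsc : |s.im - c| ≤ δ / 3 := abs_sub_le_iff.2 ⟨by linarith, by linarith⟩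
    have hdist : dist s (c * I) < δ := by
      calc dist s (c * I) ≤ |s.re| + |s.im - c| := by
            simpa [dist_eq_norm] using norm_le_abs_re_add_abs_im (s - c * I)
        _ < δ := by rw [abs_of_nonneg hpos]; linarith
    exact hthick (Metric.mem_thickening_iff.2 ⟨_, mem_image_of_mem _ hc, hdist⟩)
  refine ⟨min (π * D + δ / 3) π, δ / 3, lt_min (by linarith) (by nlinarith [Real.pi_pos]),
    min_le_right _ _, by positivity, ?_⟩
  rintro s (hneg | ⟨hre, him | him⟩)
  · exact hball (by simpa [norm_exp] using hneg)
  · exact hstrip s hre (him.trans (min_le_left _ _))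
  · have := hstrip (s - 2 * π * I) (by simpa using hre) (by simpa using him.trans (min_le_left _ _))
    rwa [exp_sub, exp_two_pi_mul_I, div_one] at this

end Bulge

/- With `w = exp s`, `kernel g z s ds = g w (-w)⁻ᶻ dw / w` for the branch of `(-w)⁻ᶻ` given by
`arg (-w) = Im s - π`; at `z = m ∈ ℕ` this is `(-1)ᵐ g w w⁻ᵐ⁻¹ dw`. -/
def kernel (g : ℂ → ℂ) (z s : ℂ) : ℂ := g (exp s) * exp (z * (π * I - s))

section Kernel

variable {g : ℂ → ℂ}

theorem differentiableOn_kernel {S : Set ℂ} (hg : DifferentiableOn ℂ (fun s => g (exp s)) S)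
    (z : ℂ) : DifferentiableOn ℂ (kernel g z) S :=
  hg.mul (by fun_prop)

theorem differentiable_vertIntegral_kernel {S : Set ℂ}
    (hg : ContinuousOn (fun s => g (exp s)) S) {x a b : ℝ} (hS : {x} ×ℂ [[a, b]] ⊆ S) :
    Differentiable ℂ fun z => vertIntegral (kernel g z) x a b :=
  (differentiable_intervalIntegral_mul_cexp
    (hg.comp (by fun_prop) fun y hy => hS (by simpa [mem_reProdIm] using hy))
    (by fun_prop)).const_smul I

theorem differentiable_horizIntegral_kernel {S : Set ℂ}
    (hg : ContinuousOn (fun s => g (exp s)) S) {y a b : ℝ} (hS : [[a, b]] ×ℂ {y} ⊆ S) :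
    Differentiable ℂ fun z => horizIntegral (kernel g z) y a b :=
  differentiable_intervalIntegral_mul_cexp
    (hg.comp (by fun_prop) fun x hx => hS (by simpa [mem_reProdIm] using hx)) (by fun_prop)

theorem kernel_add_two_pi_I (m : ℤ) (s : ℂ) : kernel g m (s + 2 * π * I) = kernel g m s := by
  rw [kernel, kernel, exp_add, exp_two_pi_mul_I, mul_one,
    show (m : ℂ) * (π * I - (s + 2 * π * I)) = m * (π * I - s) + (-m : ℤ) * (2 * π * I) by
      push_cast; ring,
    exp_add, exp_int_mul_two_pi_mul_I, mul_one]

theorem horizIntegral_kernel_two_pi (m : ℤ) (a b : ℝ) :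
    horizIntegral (kernel g m) (2 * π) a b = horizIntegral (kernel g m) 0 a b := by
  refine integral_congr fun x _ => ?_
  simpa using kernel_add_two_pi_I m (x : ℂ)

theorem vertIntegral_kernel_natCast (m : ℕ) (ℓ : ℝ) :
    vertIntegral (kernel g m) ℓ 0 (2 * π) =
      (-1) ^ m * ∮ w in C(0, Real.exp ℓ), w⁻¹ ^ m • w⁻¹ • g w := by
  rw [vertIntegral, circleIntegral, ← intervalIntegral.integral_smul,
    ← intervalIntegral.integral_const_mul]
  refine integral_congr fun y _ => ?_
  have hw : circleMap 0 (Real.exp ℓ) y = exp (ℓ + y * I) := by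
    rw [circleMap, exp_add, ofReal_exp, exp_mul_I, zero_add]
  have hexp : exp (m * (π * I - (ℓ + y * I))) = (-1) ^ m * (exp (ℓ + y * I))⁻¹ ^ m := by
    rw [show (m : ℂ) * (π * I - (ℓ + y * I)) = m * (π * I) + m * -(ℓ + y * I) by ring,
      exp_add, exp_nat_mul, exp_nat_mul, exp_pi_mul_I, exp_neg]
  simp only [deriv_circleMap, kernel, hw, hexp, smul_eq_mul]
  field_simp

end Kernel

section PowerSeries

variable {a : ℕ → ℂ}

theorem one_le_radius_ofScalars (hrad : RadiusOne a) :
    1 ≤ (FormalMultilinearSeries.ofScalars ℂ a).radius := by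
  have hbdd : IsBoundedUnder (· ≤ ·) atTop fun m : ℕ => ‖a m‖ ^ (1 / (m : ℝ)) := by
    by_contra h
    have := Real.limsup_of_not_isBoundedUnder h
    simp_all [RadiusOne]
  refine ENNReal.le_of_forall_nnreal_lt fun ρ hρ => ?_
  obtain ⟨c, hρc, hc1⟩ := exists_between (show (ρ : ℝ) < 1 by exact_mod_cast hρ)
  have hc0 : 0 < c := ρ.2.trans_lt hρc
  have hlt : ∀ᶠ m : ℕ in atTop, ‖a m‖ ^ (1 / (m : ℝ)) < c⁻¹ :=
    eventually_lt_of_limsup_lt (hrad.trans_lt ((one_lt_inv₀ hc0).2 hc1)) hbdd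
  refine FormalMultilinearSeries.le_radius_of_eventually_le _ 1 ?_
  filter_upwards [hlt, eventually_gt_atTop 0] with m hm hm0
  rw [one_div, Real.rpow_inv_lt_iff_of_pos (norm_nonneg _) (by positivity) (by positivity),
    Real.rpow_natCast] at hm
  rw [FormalMultilinearSeries.ofScalars_norm]
  calc ‖a m‖ * ρ ^ m ≤ c⁻¹ ^ m * c ^ m := by gcongr
    _ = 1 := by rw [← mul_pow, inv_mul_cancel₀ hc0.ne', one_pow]

theorem hasFPowerSeriesOnBall_powerSum (hrad : RadiusOne a) :
    HasFPowerSeriesOnBall (powerSum a) (FormalMultilinearSeries.ofScalars ℂ a) 0 1 := by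
  have hR := one_le_radius_ofScalars hrad
  have hsum : (FormalMultilinearSeries.ofScalars ℂ a).sum = powerSum a := funext fun z => by
    simp only [powerSum, ← smul_eq_mul]
    exact FormalMultilinearSeries.ofScalars_sum_eq a z
  exact hsum ▸ ((FormalMultilinearSeries.ofScalars ℂ a).hasFPowerSeriesOnBall
    (one_pos.trans_le hR)).mono one_pos hR

theorem coeff_eq_circleIntegral_powerSum (hrad : RadiusOne a) {r : ℝ} (hr₀ : 0 < r)
    (hr₁ : r < 1) (m : ℕ) :
    a m = (2 * π * I)⁻¹ * ∮ w in C(0, r), w⁻¹ ^ m • w⁻¹ • powerSum a w := by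
  have hps := hasFPowerSeriesOnBall_powerSum hrad
  lift r to NNReal using hr₀.le
  have hcauchy := (hps.differentiableOn.mono (by
    simpa [← ENNReal.coe_one, Metric.eball_coe] using Metric.closedBall_subset_ball
      (x := (0 : ℂ)) hr₁)).hasFPowerSeriesOnBall (by exact_mod_cast hr₀)
  have := congrArg (fun p => p m fun _ => 1)
    (hps.hasFPowerSeriesAt.eq_formalMultilinearSeries hcauchy.hasFPowerSeriesAt)
  rw [FormalMultilinearSeries.ofScalars_apply_eq, cauchyPowerSeries_apply] at this
  simpa only [one_pow, smul_eq_mul, mul_one, sub_zero, one_div] using this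

end PowerSeries

section Interpolant

def interpolant (g : ℂ → ℂ) (β R : ℝ) (z : ℂ) : ℂ :=
  (2 * π * I)⁻¹ * bulgeIntegral (kernel g z) β R (-1)

variable {g : ℂ → ℂ} {β R : ℝ}

theorem differentiable_interpolant (hg : ContinuousOn (fun s => g (exp s)) (bulgePath β R (-1))) :
    Differentiable ℂ (interpolant g β R) := by
  obtain ⟨h₁, h₂, h₃, h₄, h₅⟩ := segments_subset_bulgePath (β := β) (R := R) (ℓ := -1)
  unfold interpolant bulgeIntegral
  have := ((((differentiable_vertIntegral_kernel hg h₁).sub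
    (differentiable_horizIntegral_kernel hg h₂)).add
    (differentiable_vertIntegral_kernel hg h₃)).add
    (differentiable_horizIntegral_kernel hg h₄)).add
    (differentiable_vertIntegral_kernel hg h₅)
  exact this.const_mul _

theorem interpolant_natCast {a : ℕ → ℂ} (hrad : RadiusOne a)
    (hg : DifferentiableOn ℂ (fun s => g (exp s)) (bulgeRegion β R)) (hβ : 0 ≤ β)
    (hgf : ∀ w ∈ Metric.ball (0 : ℂ) 1, g w = powerSum a w) (m : ℕ) :
    interpolant g β R m = (-1) ^ m * a m := by
  have hr : Real.exp (-1) < 1 := Real.exp_lt_one_iff.2 (by norm_num)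
  have hcircle : (∮ w in C(0, Real.exp (-1)), w⁻¹ ^ m • w⁻¹ • g w) =
      ∮ w in C(0, Real.exp (-1)), w⁻¹ ^ m • w⁻¹ • powerSum a w :=
    circleIntegral.integral_congr (Real.exp_pos _).le fun w hw => by
      rw [hgf w (mem_ball_zero_iff.2 (mem_sphere_zero_iff_norm.1 hw ▸ hr))]
  have hperiodic := horizIntegral_kernel_two_pi (g := g) m (-1) R
  rw [Int.cast_natCast] at hperiodic
  rw [interpolant, bulgeIntegral_eq_vertIntegral_add (differentiableOn_kernel hg _) hβ
    (by norm_num), hperiodic, add_sub_cancel_right, vertIntegral_kernel_natCast, hcircle,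
    coeff_eq_circleIntegral_powerSum hrad (Real.exp_pos _) hr m]
  field_simp

theorem isCompact_bulgePath {ℓ : ℝ} : IsCompact (bulgePath β R ℓ) :=
  ((isCompact_singleton.reProdIm (isCompact_uIcc.union isCompact_uIcc)).union
    (isCompact_uIcc.reProdIm (isCompact_singleton.insert _))).union
    (isCompact_singleton.reProdIm isCompact_uIcc)

theorem re_mul_pi_I_sub_le_of_mem_bulgePath {z s : ℂ} {ℓ : ℝ} (hs : s ∈ bulgePath β R ℓ)
    (hβ₀ : 0 ≤ β) (hβ : β ≤ π) (hℓ : ℓ ≤ 0) (hℓR : ℓ ≤ R) (hz₀ : 0 ≤ z.re)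
    (hz : π * |z.im| ≤ R * z.re) :
    (z * (π * I - s)).re ≤ (π - β) * |z.im| - ℓ * z.re := by
  have hre : (z * (π * I - s)).re = -(z.re * s.re) + z.im * (s.im - π) := by
    simp only [mul_re, sub_re, ofReal_re, I_re, mul_zero, ofReal_im, I_im, mul_one, sub_self,
      zero_sub, mul_neg, sub_im, mul_im, add_zero]
    ring
  have him : z.im * (s.im - π) ≤ |z.im| * |s.im - π| := (le_abs_self _).trans (abs_mul _ _).le
  have hβz : 0 ≤ (π - β) * |z.im| := mul_nonneg (by linarith) (abs_nonneg _)
  have hℓz : 0 ≤ -ℓ * z.re := mul_nonneg (by linarith) hz₀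
  rw [hre]
  rcases hs with (⟨hsre, hsim⟩ | ⟨hsre, hsim⟩) | ⟨hsre, hsim⟩
  · have : |s.im - π| ≤ π := by
      rcases hsim with h | h
      · rw [uIcc_of_le hβ₀] at h
        exact abs_le.2 ⟨by linarith [h.1], by linarith [h.2]⟩
      · rw [uIcc_of_le (by linarith)] at h
        exact abs_le.2 ⟨by linarith [h.1], by linarith [h.2]⟩
    rw [mem_singleton_iff.1 hsre]
    nlinarith [mul_le_mul_of_nonneg_left this (abs_nonneg z.im)]
  · have hsim : |s.im - π| = π - β := by
      rcases hsim with h | h <;> rw [mem_singleton_iff.1 h]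
      · rw [abs_sub_comm, abs_of_nonneg (by linarith)]
      · rw [show 2 * π - β - π = π - β by ring, abs_of_nonneg (by linarith)]
    have : ℓ ≤ s.re := (uIcc_of_le hℓR ▸ hsre).1
    rw [hsim] at him
    nlinarith [mul_le_mul_of_nonneg_left this hz₀]
  · have : |s.im - π| ≤ π - β := by
      rw [uIcc_of_le (by linarith)] at hsim
      exact abs_le.2 ⟨by linarith [hsim.1], by linarith [hsim.2]⟩
    rw [mem_singleton_iff.1 hsre]
    nlinarith [mul_le_mul_of_nonneg_left this (abs_nonneg z.im)]

theorem exists_norm_interpolant_le (hg : DifferentiableOn ℂ (fun s => g (exp s)) (bulgeRegion β R))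
    (hβ₀ : 0 ≤ β) (hβ : β ≤ π) (hR : 0 ≤ R) {ℓ : ℝ} (hℓ : ℓ < 0) :
    ∃ C, ∀ z : ℂ, 0 ≤ z.re → π * |z.im| ≤ R * z.re →
      ‖interpolant g β R z‖ ≤ C * Real.exp ((π - β) * |z.im| - ℓ * z.re) := by
  obtain ⟨M, hM⟩ := isCompact_bulgePath.exists_bound_of_continuousOn
    (hg.continuousOn.mono (bulgePath_subset_bulgeRegion (R := R) hβ₀ hℓ))
  refine ⟨‖(2 * π * I)⁻¹‖ * (M * (2 * π + 2 * (R - ℓ))), fun z hz₀ hz => ?_⟩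
  rw [interpolant, bulgeIntegral_eq_of_neg (differentiableOn_kernel hg z) hβ₀ (by norm_num) hℓ,
    norm_mul, mul_assoc ‖(2 * π * I)⁻¹‖]
  gcongr
  calc _ ≤ M * Real.exp ((π - β) * |z.im| - ℓ * z.re) * (2 * π + 2 * (R - ℓ)) :=
        norm_bulgeIntegral_le hβ₀ hβ (by linarith) fun s hs => ?_
    _ = _ := by ring
  rw [kernel, norm_mul, norm_exp]
  exact mul_le_mul (hM s hs) (Real.exp_le_exp.2 (re_mul_pi_I_sub_le_of_mem_bulgePath hs hβ₀ hβ
    hℓ.le (by linarith) hz₀ hz)) (by positivity) ((norm_nonneg _).trans (hM s hs))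

theorem eventually_log_norm_interpolant_le
    (hg : DifferentiableOn ℂ (fun s => g (exp s)) (bulgeRegion β R)) (hβ₀ : 0 ≤ β) (hβ : β ≤ π)
    (hR : 0 ≤ R) {θ : ℝ} (hcos : 0 ≤ Real.cos θ) (hsin : π * |Real.sin θ| ≤ R * Real.cos θ)
    {ε : ℝ} (hε : 0 < ε) :
    ∀ᶠ t : ℝ in atTop,
      Real.log ‖interpolant g β R (t * exp (θ * I))‖ / t ≤ (π - β) * |Real.sin θ| + ε := by
  obtain ⟨C, hC⟩ := exists_norm_interpolant_le hg hβ₀ hβ hR (ℓ := -(ε / 2)) (by linarith)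
  have hbound : ∀ᶠ t : ℝ in atTop, ‖interpolant g β R (t * exp (θ * I))‖ ≤
      C * Real.exp (((π - β) * |Real.sin θ| + ε / 2) * t) := by
    filter_upwards [eventually_ge_atTop 0] with t ht
    have hre : ((t : ℂ) * exp (θ * I)).re = t * Real.cos θ := by simp [exp_ofReal_mul_I_re]
    have him : ((t : ℂ) * exp (θ * I)).im = t * Real.sin θ := by simp [exp_ofReal_mul_I_im]
    have h := hC _ (by rw [hre]; positivity)
      (by rw [hre, him, abs_mul, abs_of_nonneg ht]; nlinarith)
    have hC₀ : 0 ≤ C := (mul_nonneg_iff_of_pos_right (Real.exp_pos _)).1 ((norm_nonneg _).trans h)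
    refine h.trans ?_
    rw [hre, him, abs_mul, abs_of_nonneg ht]
    gcongr
    linarith [mul_le_mul_of_nonneg_left (Real.cos_le_one θ) (by positivity : 0 ≤ ε / 2 * t)]
  filter_upwards [eventually_log_norm_div_le (by positivity) (half_pos hε) hbound] with t ht
  linarith

end Interpolant

end Bernstein

open Bernstein

/-- necessity part of Bernstein's theorem, Theorem C. -/
theorem bernstein_necessity (a : ℕ → ℂ) (hrad : RadiusOne a)
    (D : ℝ) (hD : D ∈ Set.Ico (0 : ℝ) 1)
    (hcont : ContinuesTo a (arcI D)) :
    ∃ α : ℝ, 0 < α ∧ ∃ b : ℝ, b < 1 - D ∧ ∃ F : ℂ → ℂ,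
      DifferentiableOn ℂ F {z : ℂ | z ≠ 0 ∧ |Complex.arg z| < α} ∧
      (∀ m : ℕ, 0 < m → a m = (-1 : ℂ) ^ m * F (m : ℂ)) ∧
      ∀ θ : ℝ, |θ| < α → ∀ ε > 0, ∀ᶠ t : ℝ in Filter.atTop,
        Real.log ‖F ((t : ℂ) * Complex.exp ((θ : ℂ) * Complex.I))‖ / t ≤
          Real.pi * b * |Real.sin θ| + ε := by
  obtain ⟨hD₀, hD₁⟩ := hD
  obtain ⟨U, hU, hball, harc, g, hg, hgf⟩ := hcont
  obtain ⟨β, R, hDβ, hβ, hR, hmaps⟩ := exists_mapsTo_exp_bulgeRegion hU hball harc hD₀ hD₁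
  have hβ₀ : 0 ≤ β := by nlinarith [Real.pi_pos]
  have hge : DifferentiableOn ℂ (fun s => g (Complex.exp s)) (bulgeRegion β R) :=
    hg.comp Complex.differentiable_exp.differentiableOn hmaps
  obtain ⟨α, hα, hαθ⟩ := exists_pos_forall_abs_lt_pi_mul_abs_sin_le hR
  refine ⟨α, hα, 1 - β / Real.pi, ?_, interpolant g β R,
    (differentiable_interpolant (hge.continuousOn.mono
      (bulgePath_subset_bulgeRegion hβ₀ (by norm_num)))).differentiableOn,
    fun m _ => ?_, fun θ hθ ε hε => ?_⟩
  · rw [sub_lt_sub_iff_left, lt_div_iff₀ Real.pi_pos]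
    linarith
  · rw [interpolant_natCast hrad hge hβ₀ hgf, ← mul_assoc, ← mul_pow]
    norm_num
  · rw [show Real.pi * (1 - β / Real.pi) = Real.pi - β by field_simp]
    exact eventually_log_norm_interpolant_le hge hβ₀ hβ hR.le (hαθ θ hθ).1 (hαθ θ hθ).2 hε
end
end

section
/- Let (a_0, a_1, …, a_N) be a finite sequence of real numbers and let f be a real analytic function on the closed interval [0, N], not identically zero, such that f(n) = (−1)^n a_n for n = 0, 1, …, N. Then the number of zeros of f on [0, N], counted with multiplicities (the multiplicity of a zero x being the order of vanishing of f at x), is at least N minus the number of sign changes of the sequence (a_0, …, a_N). -/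
open Filter MeasureTheory Set Topology

noncomputable section

/-!
If `k < l` are consecutive indices of nonzero terms of `a`, the integers strictly between them are
zeros of `f`, which accounts for `l - k - 1` zeros. Since `f` changes sign across a zero exactly
when its order is odd, the total order of the zeros in `(k, l)` has the parity of `k + l` when
`a k` and `a l` have the same sign, and then it is at least `l - k`. So each gap contributes
`l - k` to the count of zeros plus sign changes, and the gaps (together with the runs of zero
coefficients at the ends) add up to `N`.
-/

lemma AnalyticOnNhd.analyticOrderAt_ne_top_of_ne_zero {𝕜 E : Type*} [NontriviallyNormedField 𝕜]
    [NormedAddCommGroup E] [NormedSpace 𝕜 E] {f : 𝕜 → E} {U : Set 𝕜} {x₀ x : 𝕜}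
    (hf : AnalyticOnNhd 𝕜 f U) (hU : IsPreconnected U) (hx₀ : x₀ ∈ U) (hfx₀ : f x₀ ≠ 0)
    (hx : x ∈ U) : analyticOrderAt f x ≠ ⊤ :=
  hf.analyticOrderAt_ne_top_of_isPreconnected hU hx₀ hx <| by
    simp [(hf x₀ hx₀).analyticOrderAt_eq_zero.mpr hfx₀]

lemma vanishOrder_eq_analyticOrderNatAt {f : ℝ → ℝ} {x : ℝ} (hf : AnalyticAt ℝ f x)
    (hx : analyticOrderAt f x ≠ ⊤) : vanishOrder f x = analyticOrderNatAt f x := by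
  obtain ⟨hlt, hne⟩ :=
    (analyticOrderAt_eq_nat_iff_iteratedDeriv_eq_zero hf).mp (Nat.cast_analyticOrderNatAt hx).symm
  exact IsLeast.csInf_eq ⟨hne, fun k hk => not_lt.mp fun h => hk (hlt k h)⟩

lemma one_le_vanishOrder {f : ℝ → ℝ} {x : ℝ} (hf : AnalyticAt ℝ f x)
    (hx : analyticOrderAt f x ≠ ⊤) (hfx : f x = 0) : 1 ≤ vanishOrder f x := by
  rw [vanishOrder_eq_analyticOrderNatAt hf hx, Nat.one_le_iff_ne_zero]
  exact fun h => (ENat.toNat_eq_zero.mp h).elim (hf.analyticOrderAt_ne_zero.mpr hfx) hx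

lemma AnalyticAt.eventually_neg_one_pow_mul_pos {f : ℝ → ℝ} {x : ℝ} {n : ℕ}
    (hf : AnalyticAt ℝ f x) (hn : analyticOrderAt f x = n) :
    ∀ᶠ qp in 𝓝[<] x ×ˢ 𝓝[>] x, 0 < (-1) ^ n * (f qp.1 * f qp.2) := by
  obtain ⟨g, hg, hgx, hfg⟩ := hf.analyticOrderAt_eq_natCast.mp hn
  have hnear : ∀ᶠ y in 𝓝 x, 0 < g y * g x ∧ f y = (y - x) ^ n * g y :=
    ((hg.continuousAt.mul_const (g x)).eventually_const_lt (mul_self_pos.mpr hgx)).and hfg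
  filter_upwards [(eventually_mem_nhdsWithin.and (nhdsWithin_le_nhds hnear)).prod_mk
    (eventually_mem_nhdsWithin.and (nhdsWithin_le_nhds hnear))]
    with ⟨q, p⟩ ⟨⟨hqx, hgq, hfq⟩, ⟨hxp, hgp, hfp⟩⟩
  have hgqp : 0 < g q * g p :=
    (mul_pos_iff_of_pos_right (mul_self_pos.mpr hgx)).mp (by nlinarith [mul_pos hgq hgp])
  have hxq : 0 < x - q := sub_pos.mpr hqx
  have hpx : 0 < p - x := sub_pos.mpr hxp
  calc (0 : ℝ) < ((x - q) * (p - x)) ^ n * (g q * g p) := by positivity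
    _ = (-1) ^ n * (f q * f p) := by
      rw [hfq, hfp, show x - q = -1 * (q - x) by ring, mul_pow, mul_pow]; ring

lemma pos_mul_of_forall_ne_zero {α : Type*} [ConditionallyCompleteLinearOrder α]
    [TopologicalSpace α] [OrderTopology α] [DenselyOrdered α] {f : α → ℝ} {u v : α}
    (huv : u ≤ v) (hf : ContinuousOn f (Icc u v)) (hzero : ∀ z ∈ Icc u v, f z ≠ 0) :
    0 < f u * f v := by
  by_contra! h
  obtain ⟨z, hz, hfz⟩ : ∃ z ∈ Icc u v, f z = 0 := by
    rcases mul_nonpos_iff.mp h with ⟨hu, hv⟩ | ⟨hu, hv⟩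
    · exact intermediate_value_Icc' huv hf ⟨hv, hu⟩
    · exact intermediate_value_Icc huv hf ⟨hu, hv⟩
  exact hzero z hz hfz

lemma AnalyticOnNhd.finite_setOf_eq_zero {𝕜 E : Type*} [NontriviallyNormedField 𝕜]
    [NormedAddCommGroup E] [NormedSpace 𝕜 E] {f : 𝕜 → E} {K : Set 𝕜} {x₀ : 𝕜}
    (hf : AnalyticOnNhd 𝕜 f K) (hK : IsCompact K) (hKc : IsConnected K) (hx₀ : x₀ ∈ K)
    (hfx₀ : f x₀ ≠ 0) : {x ∈ K | f x = 0}.Finite :=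
  (hK.finite_sdiff_of_mem_codiscreteWithin
    (hf.preimage_zero_mem_codiscreteWithin hfx₀ hx₀ hKc)).subset
    fun _ ⟨hx, hfx⟩ => ⟨hx, fun h => h hfx⟩

theorem pos_mul_mul_neg_one_pow_sum_analyticOrderNatAt {f : ℝ → ℝ} {u v : ℝ} {s : Finset ℝ}
    (hu : f u ≠ 0) (huv : u ≤ v) (hf : AnalyticOnNhd ℝ f (Icc u v)) (hv : f v ≠ 0)
    (hs : ∀ x, x ∈ s ↔ x ∈ Ioo u v ∧ f x = 0) :
    0 < f u * f v * (-1) ^ ∑ x ∈ s, analyticOrderNatAt f x := by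
  induction s using Finset.induction_on_max generalizing v with
  | empty =>
    simpa using pos_mul_of_forall_ne_zero huv hf.continuousOn fun z hz hfz => by
      rcases hz.1.eq_or_lt with rfl | huz
      · exact hu hfz
      rcases hz.2.eq_or_lt with rfl | hzv
      · exact hv hfz
      simpa using (hs z).mpr ⟨⟨huz, hzv⟩, hfz⟩
  | insert x s hsx ih =>
    have hzeros : ∀ y ∈ Ioo u v, f y = 0 → y = x ∨ y ∈ s := fun y hy hfy =>
      Finset.mem_insert.mp ((hs y).mpr ⟨hy, hfy⟩)
    obtain ⟨⟨hux, hxv⟩, -⟩ := (hs x).mp (Finset.mem_insert_self x s)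
    have hord : analyticOrderAt f x = analyticOrderNatAt f x :=
      (Nat.cast_analyticOrderNatAt (hf.analyticOrderAt_ne_top_of_ne_zero isPreconnected_Icc
        (left_mem_Icc.mpr huv) hu ⟨hux.le, hxv.le⟩)).symm
    -- Cross the largest zero `x` between points `q < x < p` close to `x`: the local sign rule
    -- links `f q` with `f p`, the induction hypothesis covers `[u, q]`, and `[p, v]` is zero-free.
    have hleft : ∀ᶠ q in 𝓝[<] x, q ∈ Ioo u x ∧ ∀ y ∈ s, y < q :=
      Filter.Eventually.and (Ioo_mem_nhdsLT hux)
        ((eventually_all_finset s).mpr fun y hy =>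
          nhdsWithin_le_nhds (eventually_gt_nhds (hsx y hy)))
    obtain ⟨⟨q, p⟩, ⟨⟨⟨huq, hqx⟩, hsq⟩, hxp, hpv⟩, hsign⟩ :=
      ((hleft.prod_mk (Ioo_mem_nhdsGT hxv)).and
        ((hf x ⟨hux.le, hxv.le⟩).eventually_neg_one_pow_mul_pos hord)).exists
    have hfq : f q ≠ 0 := fun hfq => (hzeros q ⟨huq, hqx.trans hxv⟩ hfq).elim hqx.ne
      fun hq => (hsq q hq).false
    have hfp : f p ≠ 0 := fun hfp => (hzeros p ⟨hux.trans hxp, hpv⟩ hfp).elim hxp.ne'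
      fun hp => ((hsx p hp).trans hxp).false
    have huq' := ih huq.le (hf.mono (Icc_subset_Icc_right (hqx.trans hxv).le)) hfq fun y =>
      ⟨fun hy => ⟨⟨((hs y).mp (Finset.mem_insert_of_mem hy)).1.1, hsq y hy⟩,
          ((hs y).mp (Finset.mem_insert_of_mem hy)).2⟩,
        fun ⟨hy, hfy⟩ => (hzeros y ⟨hy.1, hy.2.trans (hqx.trans hxv)⟩ hfy).resolve_left
          (hy.2.trans hqx).ne⟩
    have hpv' : 0 < f p * f v := pos_mul_of_forall_ne_zero hpv.le
      (hf.continuousOn.mono (Icc_subset_Icc_left (hux.trans hxp).le)) fun z hz hfz => by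
        rcases hz.2.eq_or_lt with rfl | hzv
        · exact hv hfz
        rcases hzeros z ⟨(hux.trans hxp).trans_le hz.1, hzv⟩ hfz with rfl | hzs
        · exact hxp.not_ge hz.1
        · exact ((hsx z hzs).trans (hxp.trans_le hz.1)).false
    rw [Finset.sum_insert fun hxs => (hsx x hxs).false, pow_add]
    refine (mul_pos_iff_of_pos_right (pow_pos (mul_self_pos.mpr (mul_ne_zero hfq hfp)) 1)).mp ?_
    convert mul_pos (mul_pos huq' hsign) hpv' using 1
    ring

theorem pos_mul_mul_neg_one_pow_sum_vanishOrder {f : ℝ → ℝ} {s t u v : ℝ} {Z : Finset ℝ}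
    (hf : AnalyticOnNhd ℝ f (Icc s t)) (hZ : ∀ x, x ∈ Z ↔ x ∈ Icc s t ∧ f x = 0) (hsu : s ≤ u)
    (huv : u ≤ v) (hvt : v ≤ t) (hu : f u ≠ 0) (hv : f v ≠ 0) :
    0 < f u * f v * (-1) ^ ∑ x ∈ Z with u < x ∧ x < v, vanishOrder f x := by
  have hsum : ∑ x ∈ Z with u < x ∧ x < v, vanishOrder f x =
      ∑ x ∈ Z with u < x ∧ x < v, analyticOrderNatAt f x :=
    Finset.sum_congr rfl fun x hx => by
      have hxI := ((hZ x).mp (Finset.mem_filter.mp hx).1).1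
      exact vanishOrder_eq_analyticOrderNatAt (hf x hxI)
        (hf.analyticOrderAt_ne_top_of_ne_zero isPreconnected_Icc ⟨hsu, huv.trans hvt⟩ hu hxI)
  rw [hsum]
  refine pos_mul_mul_neg_one_pow_sum_analyticOrderNatAt hu huv
    (hf.mono (Icc_subset_Icc hsu hvt)) hv fun x => ?_
  rw [Finset.mem_filter, hZ, mem_Icc, mem_Ioo]
  grind

lemma exists_lt_ne_zero_forall_eq_zero {α : Type*} [Zero α] (a : ℕ → α) {m : ℕ}
    (h : ∃ j < m, a j ≠ 0) : ∃ k < m, a k ≠ 0 ∧ ∀ j, k < j → j < m → a j = 0 := by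
  induction m with
  | zero => simp at h
  | succ m ih =>
    by_cases ham : a m = 0
    · obtain ⟨j, hj, hja⟩ := h
      obtain ⟨k, hkm, hak, hgap⟩ :=
        ih ⟨j, lt_of_le_of_ne (Nat.lt_succ_iff.mp hj) (by rintro rfl; exact hja ham), hja⟩
      refine ⟨k, hkm.trans m.lt_succ_self, hak, fun j hkj hjm => ?_⟩
      rcases (Nat.lt_succ_iff.mp hjm).eq_or_lt with rfl | hjm
      exacts [ham, hgap j hkj hjm]
    · exact ⟨m, m.lt_succ_self, ham, fun j h₁ h₂ => by omega⟩

lemma Finset.sum_filter_le_add_sum_filter_Ioc {α M : Type*} [LinearOrder α] [AddCommMonoid M]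
    (Z : Finset α) (w : α → M) {s t : α} (hst : s ≤ t) :
    ∑ x ∈ Z with x ≤ s, w x + ∑ x ∈ Z with s < x ∧ x ≤ t, w x = ∑ x ∈ Z with x ≤ t, w x := by
  rw [← Finset.sum_filter_add_sum_filter_not (Z.filter (· ≤ t)) (· ≤ s), Finset.filter_filter,
    Finset.filter_filter]
  congr 2 <;> ext x <;> simp only [Finset.mem_filter, not_le] <;> grind

lemma card_le_sum_filter {Z : Finset ℝ} {w : ℝ → ℕ} {p : ℝ → Prop} [DecidablePred p]
    {I : Finset ℕ} (hZ : ∀ j ∈ I, (j : ℝ) ∈ Z ∧ 1 ≤ w j) (hp : ∀ j ∈ I, p j) :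
    I.card ≤ ∑ x ∈ Z with p x, w x := by
  set J := I.map (Nat.castEmbedding : ℕ ↪ ℝ)
  calc I.card = J.card := (Finset.card_map _).symm
    _ ≤ ∑ x ∈ J, w x := by
      simpa using Finset.card_nsmul_le_sum J w 1 fun x hx => by
        obtain ⟨j, hj, rfl⟩ := Finset.mem_map.mp hx
        simpa using (hZ j hj).2
    _ ≤ ∑ x ∈ Z with p x, w x := Finset.sum_le_sum_of_subset fun x hx => by
      obtain ⟨j, hj, rfl⟩ := Finset.mem_map.mp hx
      simpa using ⟨(hZ j hj).1, hp j hj⟩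

section SignChanges

variable {a : ℕ → ℝ}

lemma signChangesUpTo_mono : Monotone (signChangesUpTo a) := fun _ m hkm =>
  Set.ncard_le_ncard (fun _ hj => ⟨hj.1.trans hkm, hj.2⟩)
    ((Set.finite_Iic m).subset fun _ hj => hj.1)

lemma signChangesUpTo_lt_of_signChangeAt {k m : ℕ} (hkm : k < m) (hm : SignChangeAt a m) :
    signChangesUpTo a k < signChangesUpTo a m :=
  Set.ncard_lt_ncard ⟨fun _ hj => ⟨hj.1.trans hkm.le, hj.2⟩, fun h => (h ⟨le_rfl, hm⟩).1.not_gt hkm⟩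
    ((Set.finite_Iic m).subset fun _ hj => hj.1)

end SignChanges

section Counting

variable {N : ℕ} {a : ℕ → ℝ} {Z : Finset ℝ} {w : ℝ → ℕ}

lemma add_signChangesUpTo_le_of_gap (hzero : ∀ j ≤ N, a j = 0 → (j : ℝ) ∈ Z ∧ 1 ≤ w j)
    (hparity : ∀ k l, k < l → l ≤ N → a k ≠ 0 → a l ≠ 0 →
      0 < (-1) ^ (k + l + ∑ x ∈ Z with (k : ℝ) < x ∧ x < l, w x) * (a k * a l))
    {k m : ℕ} (hkm : k < m) (hmN : m ≤ N) (hak : a k ≠ 0)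
    (hgap : ∀ j, k < j → j < m → a j = 0) :
    m + signChangesUpTo a k ≤
      k + ∑ x ∈ Z with (k : ℝ) < x ∧ x ≤ m, w x + signChangesUpTo a m := by
  have hsc := signChangesUpTo_mono (a := a) hkm.le
  by_cases ham : a m = 0
  · have hIoc := card_le_sum_filter (Z := Z) (w := w) (p := fun x : ℝ => (k : ℝ) < x ∧ x ≤ m)
      (I := Finset.Ioc k m)
      (fun j hj => by
        obtain ⟨hkj, hjm⟩ := Finset.mem_Ioc.mp hj
        refine hzero j (hjm.trans hmN) ?_
        rcases hjm.eq_or_lt with rfl | hjm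
        exacts [ham, hgap j hkj hjm])
      fun j hj => by simpa using Finset.mem_Ioc.mp hj
    rw [Nat.card_Ioc] at hIoc
    omega
  set W := ∑ x ∈ Z with (k : ℝ) < x ∧ x < m, w x
  have hW : m - k - 1 ≤ W := by
    simpa using card_le_sum_filter (Z := Z) (w := w) (p := fun x : ℝ => (k : ℝ) < x ∧ x < m)
      (I := Finset.Ioo k m)
      (fun j hj => hzero j (by grind) (hgap j (Finset.mem_Ioo.mp hj).1 (Finset.mem_Ioo.mp hj).2))
      fun j hj => by simpa using Finset.mem_Ioo.mp hj
  have hWle : W ≤ ∑ x ∈ Z with (k : ℝ) < x ∧ x ≤ m, w x :=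
    Finset.sum_le_sum_of_subset (Finset.monotone_filter_right _ fun _ _ h => ⟨h.1, h.2.le⟩)
  by_cases hsign : a m * a k < 0
  · have := signChangesUpTo_lt_of_signChangeAt hkm ⟨k, hkm, hsign, hgap⟩
    omega
  · have heven : Even (k + m + W) := by
      by_contra hodd
      have hneg := hparity k m hkm hmN hak ham
      rw [(Nat.not_even_iff_odd.mp hodd).neg_one_pow] at hneg
      linarith [not_lt.mp hsign]
    rw [Nat.even_iff] at heven
    omega

theorem le_sum_add_signChangesUpTo (hzero : ∀ j ≤ N, a j = 0 → (j : ℝ) ∈ Z ∧ 1 ≤ w j)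
    (hparity : ∀ k l, k < l → l ≤ N → a k ≠ 0 → a l ≠ 0 →
      0 < (-1) ^ (k + l + ∑ x ∈ Z with (k : ℝ) < x ∧ x < l, w x) * (a k * a l)) :
    N ≤ ∑ x ∈ Z, w x + signChangesUpTo a N := by
  suffices h : ∀ m ≤ N, m ≤ ∑ x ∈ Z with x ≤ (m : ℝ), w x + signChangesUpTo a m from
    (h N le_rfl).trans (by gcongr; exact Finset.filter_subset _ _)
  intro m
  induction m using Nat.strong_induction_on with
  | _ m ih =>
  intro hmN
  by_cases h : ∃ j < m, a j ≠ 0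
  · obtain ⟨k, hkm, hak, hgap⟩ := exists_lt_ne_zero_forall_eq_zero a h
    have hk := ih k hkm (hkm.le.trans hmN)
    have hgapk := add_signChangesUpTo_le_of_gap hzero hparity hkm hmN hak hgap
    have hsplit :=
      Finset.sum_filter_le_add_sum_filter_Ioc Z w (Nat.cast_le.mpr hkm.le : (k : ℝ) ≤ m)
    omega
  · push Not at h
    have := card_le_sum_filter (Z := Z) (w := w) (p := fun x : ℝ => x ≤ m) (I := Finset.range m)
      (fun j hj => hzero j (by grind) (h j (Finset.mem_range.mp hj)))
      fun j hj => by simpa using (Finset.mem_range.mp hj).le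
    simp only [Finset.card_range] at this
    omega

end Counting

/-- Lemma 1 of the paper. -/
theorem zeros_vs_sign_changes (N : ℕ) (a : ℕ → ℝ) (f : ℝ → ℝ)
    (hf : ∀ x ∈ Set.Icc (0 : ℝ) (N : ℝ), AnalyticAt ℝ f x)
    (hne : ∃ x ∈ Set.Icc (0 : ℝ) (N : ℝ), f x ≠ 0)
    (hval : ∀ k : ℕ, k ≤ N → f (k : ℝ) = (-1 : ℝ) ^ k * a k) :
    ∃ Z : Finset ℝ, (↑Z = {x ∈ Set.Icc (0 : ℝ) (N : ℝ) | f x = 0}) ∧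
      N ≤ (∑ x ∈ Z, vanishOrder f x) + signChangesUpTo a N := by
  obtain ⟨x₀, hx₀, hfx₀⟩ := hne
  have hfin := AnalyticOnNhd.finite_setOf_eq_zero hf isCompact_Icc
    ⟨⟨x₀, hx₀⟩, isPreconnected_Icc⟩ hx₀ hfx₀
  have hZ : ∀ x, x ∈ hfin.toFinset ↔ x ∈ Icc (0 : ℝ) N ∧ f x = 0 := fun x => by simp
  have hcast : ∀ {j : ℕ}, j ≤ N → (j : ℝ) ∈ Icc (0 : ℝ) N := fun hj =>
    ⟨Nat.cast_nonneg _, Nat.cast_le.mpr hj⟩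
  have hfa : ∀ {j : ℕ}, j ≤ N → a j ≠ 0 → f j ≠ 0 := fun hj haj => by
    rw [hval _ hj]
    exact mul_ne_zero (by simp) haj
  refine ⟨hfin.toFinset, hfin.coe_toFinset, le_sum_add_signChangesUpTo (fun j hj haj => ?_)
    fun k l hkl hlN hak hal => ?_⟩
  · have hfj : f j = 0 := by rw [hval j hj, haj, mul_zero]
    exact ⟨(hZ j).mpr ⟨hcast hj, hfj⟩, one_le_vanishOrder (hf j (hcast hj))
      (AnalyticOnNhd.analyticOrderAt_ne_top_of_ne_zero hf isPreconnected_Icc hx₀ hfx₀ (hcast hj))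
      hfj⟩
  · have hkN := hkl.le.trans hlN
    have hpos := pos_mul_mul_neg_one_pow_sum_vanishOrder hf hZ (hcast hkN).1
      (Nat.cast_le.mpr hkl.le) (hcast hlN).2 (hfa hkN hak) (hfa hlN hal)
    rw [hval k hkN, hval l hlN] at hpos
    convert hpos using 1
    ring
end
end

section
/- Let δ > 0, let n and n₁ be increasing functions on [0, δ] with n(0) = n₁(0) = 0 such that n₁ − n is increasing, and let a ∈ [0,1]. If ∫_0^δ (overline{n}^a(r) − n(r))/r² dr = ∞, then ∫_0^δ (overline{n₁}^a(r) − n₁(r))/r² dr = ∞. -/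
open Filter MeasureTheory Set Topology

noncomputable section

/-!
The upper regularization has the closed form `sup_{t ∈ [0, δ]} (n t - a (t - u)⁺)` at `u`:
an admissible majorant `φ` is increasing and `a`-Lipschitz, so `φ u ≥ n t - a (t - u)⁺` for
every `t`; conversely, if `B` is that supremum, the smoothed tents
`B + ε log (1 + e^{a (t - u) / ε})` are admissible and equal `B + ε log 2` at `u`.
In this form, raising `n` to `n₁` with `n₁ - n` increasing raises the supremum at `u` by at
least `n₁ u - n u`, so `upperReg n - n ≤ upperReg n₁ - n₁` pointwise and the divergence of
the integral transfers from `n` to `n₁`.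
-/

open Real

/-- The least increasing, `a`-Lipschitz majorant of `n` on `s`. -/
def upperRegSup (n : ℝ → ℝ) (a : ℝ) (s : Set ℝ) (u : ℝ) : ℝ :=
  sSup ((fun t => n t - a * max (t - u) 0) '' s)

lemma Convex.monotoneOn_of_hasDerivWithinAt_nonneg {D : Set ℝ} (hD : Convex ℝ D)
    {f f' : ℝ → ℝ} (hf : ∀ x ∈ D, HasDerivWithinAt f (f' x) D x) (hf' : ∀ x ∈ D, 0 ≤ f' x) :
    MonotoneOn f D :=
  _root_.monotoneOn_of_hasDerivWithinAt_nonneg hD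
    (fun x hx => (hf x hx).continuousWithinAt)
    (fun x hx => (hf x (interior_subset hx)).mono interior_subset)
    (fun x hx => hf' x (interior_subset hx))

lemma max_le_mul_log_one_add_exp {ε : ℝ} (hε : 0 < ε) (x : ℝ) :
    max x 0 ≤ ε * log (1 + exp (x / ε)) := by
  refine max_le ?_ (mul_nonneg hε.le (log_nonneg (by linarith [exp_pos (x / ε)])))
  calc x = ε * log (exp (x / ε)) := by rw [log_exp]; field_simp
    _ ≤ ε * log (1 + exp (x / ε)) := by
      gcongr
      linarith [exp_pos (x / ε)]

lemma hasDerivAt_log_one_add_exp (x : ℝ) :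
    HasDerivAt (fun x => log (1 + exp x)) (exp x / (1 + exp x)) x :=
  ((hasDerivAt_exp x).const_add 1).log (by positivity)

section UpperReg

variable {n n₁ φ : ℝ → ℝ} {a u : ℝ} {s : Set ℝ}

lemma upperRegOn_le (hu : u ∈ s) (hφ : ContDiffOn ℝ 1 φ s) (hn : ∀ t ∈ s, n t ≤ φ t)
    (hd : ∀ t ∈ s, 0 ≤ derivWithin φ s t ∧ derivWithin φ s t ≤ a) :
    upperRegOn n a s u ≤ φ u :=
  csInf_le ⟨n u, by rintro _ ⟨ψ, -, hψ, -, rfl⟩; exact hψ u hu⟩ ⟨φ, hφ, hn, hd, rfl⟩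

lemma le_upperRegOn {b : ℝ} (hbdd : BddAbove (n '' s)) (ha : 0 ≤ a)
    (h : ∀ φ : ℝ → ℝ, ContDiffOn ℝ 1 φ s → (∀ t ∈ s, n t ≤ φ t) →
      (∀ t ∈ s, 0 ≤ derivWithin φ s t ∧ derivWithin φ s t ≤ a) → b ≤ φ u) :
    b ≤ upperRegOn n a s u := by
  obtain ⟨C, hC⟩ := hbdd
  refine le_csInf ⟨C, fun _ => C, contDiffOn_const, fun t ht => hC (mem_image_of_mem n ht),
    fun t _ => ?_, rfl⟩ ?_
  · simp [ha]
  · rintro _ ⟨φ, hφ, hn, hd, rfl⟩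
    exact h φ hφ hn hd

lemma le_upperRegSup (hbdd : BddAbove (n '' s)) (ha : 0 ≤ a) {t : ℝ} (ht : t ∈ s) :
    n t - a * max (t - u) 0 ≤ upperRegSup n a s u := by
  refine le_csSup ?_ (mem_image_of_mem _ ht)
  obtain ⟨C, hC⟩ := hbdd
  refine ⟨C, ?_⟩
  rintro _ ⟨r, hr, rfl⟩
  have := hC (mem_image_of_mem n hr)
  have : 0 ≤ a * max (r - u) 0 := by positivity
  linarith

lemma sub_mul_max_le_of_derivWithin_bounds (hs : Convex ℝ s) (hφ : DifferentiableOn ℝ φ s)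
    (hd : ∀ t ∈ s, 0 ≤ derivWithin φ s t ∧ derivWithin φ s t ≤ a) (hu : u ∈ s) {t : ℝ}
    (ht : t ∈ s) : φ t - a * max (t - u) 0 ≤ φ u := by
  have hφ' : ∀ x ∈ s, HasDerivWithinAt φ (derivWithin φ s x) s x :=
    fun x hx => (hφ x hx).hasDerivWithinAt
  rcases le_total t u with htu | hut
  · have hmono : MonotoneOn φ s := hs.monotoneOn_of_hasDerivWithinAt_nonneg hφ'
      fun x hx => (hd x hx).1
    simp [max_eq_right (sub_nonpos.2 htu), hmono ht hu htu]
  · have hmono : MonotoneOn (fun x => a * x - φ x) s :=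
      hs.monotoneOn_of_hasDerivWithinAt_nonneg
        (fun x hx => ((hasDerivWithinAt_id x s).const_mul a).sub (hφ' x hx))
        fun x hx => by simpa using (hd x hx).2
    have := hmono hu ht hut
    rw [max_eq_left (sub_nonneg.2 hut)]
    linarith

lemma upperRegSup_le_upperRegOn (hs : Convex ℝ s) (hbdd : BddAbove (n '' s)) (ha : 0 ≤ a)
    (hu : u ∈ s) : upperRegSup n a s u ≤ upperRegOn n a s u := by
  refine le_upperRegOn hbdd ha fun φ hφ hn hd => csSup_le ⟨_, mem_image_of_mem _ hu⟩ ?_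
  rintro _ ⟨t, ht, rfl⟩
  have := sub_mul_max_le_of_derivWithin_bounds hs (hφ.differentiableOn one_ne_zero) hd hu ht
  linarith [hn t ht]

lemma upperRegOn_le_upperRegSup (hs : UniqueDiffOn ℝ s) (hbdd : BddAbove (n '' s))
    (ha : 0 ≤ a) (hu : u ∈ s) : upperRegOn n a s u ≤ upperRegSup n a s u := by
  refine le_of_forall_pos_le_add fun ε hε => ?_
  set B := upperRegSup n a s u
  let φ : ℝ → ℝ := fun t => B + ε * log (1 + exp (a * (t - u) / ε))
  have hφ' : ∀ t, HasDerivAt φ (a * (exp (a * (t - u) / ε) / (1 + exp (a * (t - u) / ε)))) t := by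
    intro t
    have hlin : HasDerivAt (fun t => a * (t - u) / ε) (a / ε) t := by
      simpa using (((hasDerivAt_id t).sub_const u).const_mul a).div_const ε
    exact ((((hasDerivAt_log_one_add_exp _).comp t hlin).const_mul ε).const_add B).congr_deriv
      (by field_simp)
  have hφ : ContDiffOn ℝ 1 φ s := by
    refine (contDiff_const.add (contDiff_const.mul (ContDiff.log ?_ fun t => ?_))).contDiffOn
    · fun_prop
    · positivity
  have hn : ∀ t ∈ s, n t ≤ φ t := by
    intro t ht
    have h₁ := le_upperRegSup hbdd ha (u := u) ht
    have h₂ := max_le_mul_log_one_add_exp hε (a * (t - u))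
    have h₃ : a * max (t - u) 0 = max (a * (t - u)) 0 := by rw [mul_max_of_nonneg _ _ ha, mul_zero]
    simp only [φ]
    linarith
  have hd : ∀ t ∈ s, 0 ≤ derivWithin φ s t ∧ derivWithin φ s t ≤ a := by
    intro t ht
    rw [(hφ' t).hasDerivWithinAt.derivWithin (hs t ht)]
    have h₀ : 0 < exp (a * (t - u) / ε) := exp_pos _
    refine ⟨by positivity, mul_le_of_le_one_right ha ((div_le_one (by positivity)).2 ?_)⟩
    linarith
  calc upperRegOn n a s u ≤ φ u := upperRegOn_le hu hφ hn hd
    _ = B + ε * log 2 := by norm_num [φ, one_add_one_eq_two]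
    _ ≤ B + ε := by
      have := log_two_lt_d9
      gcongr
      exact mul_le_of_le_one_right hε.le (by linarith)

theorem upperRegOn_eq_upperRegSup (hs : Convex ℝ s) (hs' : UniqueDiffOn ℝ s)
    (hbdd : BddAbove (n '' s)) (ha : 0 ≤ a) (hu : u ∈ s) :
    upperRegOn n a s u = upperRegSup n a s u :=
  (upperRegOn_le_upperRegSup hs' hbdd ha hu).antisymm (upperRegSup_le_upperRegOn hs hbdd ha hu)

lemma upperRegSup_add_sub_le (hbdd₁ : BddAbove (n₁ '' s)) (hmono : MonotoneOn n s)
    (hsucc : MonotoneOn (fun r => n₁ r - n r) s) (ha : 0 ≤ a) (hu : u ∈ s) :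
    upperRegSup n a s u + (n₁ u - n u) ≤ upperRegSup n₁ a s u := by
  rw [← le_sub_iff_add_le]
  refine csSup_le ⟨_, mem_image_of_mem _ hu⟩ ?_
  rintro _ ⟨t, ht, rfl⟩
  dsimp only
  rcases le_total t u with htu | hut
  · have := le_upperRegSup hbdd₁ ha (u := u) hu
    simp only [sub_self, max_self, mul_zero, sub_zero] at this
    rw [max_eq_right (sub_nonpos.2 htu)]
    linarith [hmono ht hu htu]
  · linarith [le_upperRegSup hbdd₁ ha (u := u) ht, hsucc hu ht hut]

lemma upperRegOn_sub_le_upperRegOn_sub (hs : Convex ℝ s) (hs' : UniqueDiffOn ℝ s)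
    (hbdd : BddAbove (n '' s)) (hbdd₁ : BddAbove (n₁ '' s)) (hmono : MonotoneOn n s)
    (hsucc : MonotoneOn (fun r => n₁ r - n r) s) (ha : 0 ≤ a) (hu : u ∈ s) :
    upperRegOn n a s u - n u ≤ upperRegOn n₁ a s u - n₁ u := by
  rw [upperRegOn_eq_upperRegSup hs hs' hbdd ha hu, upperRegOn_eq_upperRegSup hs hs' hbdd₁ ha hu]
  linarith [upperRegSup_add_sub_le hbdd₁ hmono hsucc ha hu]

end UpperReg

theorem regularization_integral_mono_general (δ : ℝ) (hδ : 0 < δ) (n n₁ : ℝ → ℝ)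
    (hmono : MonotoneOn n (Set.Icc 0 δ))
    (hmono₁ : MonotoneOn n₁ (Set.Icc 0 δ))
    (hsucc : MonotoneOn (fun r => n₁ r - n r) (Set.Icc 0 δ))
    (a : ℝ) (ha : a ∈ Set.Icc (0 : ℝ) 1)
    (hdiv : ∫⁻ r in Set.Ioc (0 : ℝ) δ,
        ENNReal.ofReal ((upperReg n a δ r - n r) / r ^ 2) = ⊤) :
    ∫⁻ r in Set.Ioc (0 : ℝ) δ,
      ENNReal.ofReal ((upperReg n₁ a δ r - n₁ r) / r ^ 2) = ⊤ := by
  have hδ_ub : (upperBounds (Icc 0 δ) ∩ Icc 0 δ).Nonempty :=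
    ⟨δ, fun _ h => h.2, right_mem_Icc.2 hδ.le⟩
  have hle : ∀ r ∈ Ioc 0 δ, upperReg n a δ r - n r ≤ upperReg n₁ a δ r - n₁ r := fun r hr =>
    upperRegOn_sub_le_upperRegOn_sub (convex_Icc 0 δ) (uniqueDiffOn_Icc hδ)
      (hmono.map_bddAbove subset_rfl hδ_ub) (hmono₁.map_bddAbove subset_rfl hδ_ub) hmono hsucc
      ha.1 (Ioc_subset_Icc_self hr)
  rw [eq_top_iff, ← hdiv]
  exact setLIntegral_mono' measurableSet_Ioc fun r hr =>
    ENNReal.ofReal_le_ofReal (div_le_div_of_nonneg_right (hle r hr) (sq_nonneg r))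

/-- Lemma 3 of the paper. -/
theorem regularization_integral_mono (δ : ℝ) (hδ : 0 < δ) (n n₁ : ℝ → ℝ)
    (hmono : MonotoneOn n (Set.Icc 0 δ)) (h0 : n 0 = 0)
    (hmono₁ : MonotoneOn n₁ (Set.Icc 0 δ)) (h0₁ : n₁ 0 = 0)
    (hsucc : MonotoneOn (fun r => n₁ r - n r) (Set.Icc 0 δ))
    (a : ℝ) (ha : a ∈ Set.Icc (0 : ℝ) 1)
    (hdiv : ∫⁻ r in Set.Ioc (0 : ℝ) δ,
        ENNReal.ofReal ((upperReg n a δ r - n r) / r ^ 2) = ⊤) :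
    ∫⁻ r in Set.Ioc (0 : ℝ) δ,
      ENNReal.ofReal ((upperReg n₁ a δ r - n₁ r) / r ^ 2) = ⊤ :=
  regularization_integral_mono_general δ hδ n n₁ hmono hmono₁ hsucc a ha hdiv
end
end

section
/- Let (J_n)_{n ∈ ℕ} be a countable family of open bounded intervals of the real line whose lengths tend to zero, and let E be the union of these intervals. Then there exists a subfamily of these intervals whose union is also E and such that no point of E belongs to more than two intervals of the subfamily. -/
open Filter MeasureTheory Set Topology

noncomputable section

/-!
Since the lengths tend to zero, only finitely many intervals contain a given nonempty interval.
Hence every interval lies in one that is maximal for inclusion, and the maximal intervals cover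
`E` with finite multiplicity. By Zorn's lemma they contain a minimal subcover: a chain of
subcovers has a subcover as intersection, because at each point the intervals through it form
a finite set. A minimal subcover has multiplicity at most two: among three intervals through a
common point, one that neither starts first nor ends last lies in the union of the other two.
-/

theorem IsChain.sInter_inter_nonempty {ι : Type*} {c : Set (Set ι)} (hc : IsChain (· ⊆ ·) c)
    (hne : c.Nonempty) {F : Set ι} (hF : F.Finite) (h : ∀ T ∈ c, (T ∩ F).Nonempty) :
    (⋂₀ c ∩ F).Nonempty := by
  by_contra hempty
  -- The complements of the members of `c` form a directed family covering the finite set `F`.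
  have hcover : (hF.toFinset : Set ι) ⊆ ⋃ T ∈ c, Tᶜ := by
    intro i hi
    rw [hF.coe_toFinset] at hi
    by_contra hiT
    simp only [mem_iUnion, mem_compl_iff, not_exists, not_not] at hiT
    exact hempty ⟨i, hiT, hi⟩
  have hdir : DirectedOn (fun T T' : Set ι => Tᶜ ⊆ T'ᶜ) c :=
    (IsChain.directedOn (r := (· ⊇ ·)) hc.symm).mono fun _ _ h => compl_subset_compl.2 h
  obtain ⟨T, hT, hFT⟩ := hdir.exists_mem_subset_of_finset_subset_biUnion hne hcover
  obtain ⟨i, hiT, hiF⟩ := h T hT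
  exact hFT (hF.mem_toFinset.2 hiF) hiT

theorem exists_minimal_subcover_of_pointFinite {ι X : Type*} (U : ι → Set X) {S₀ : Set ι}
    {E : Set X} (hS₀ : ⋃ i ∈ S₀, U i = E) (hfin : ∀ x ∈ E, {i | i ∈ S₀ ∧ x ∈ U i}.Finite) :
    ∃ S, Minimal (fun T => T ⊆ S₀ ∧ ⋃ i ∈ T, U i = E) S := by
  have hchain : ∀ c ⊆ {T | T ⊆ S₀ ∧ ⋃ i ∈ T, U i = E}, IsChain (· ⊆ ·) c → c.Nonempty →
      ⋂₀ c ⊆ S₀ ∧ ⋃ i ∈ ⋂₀ c, U i = E := by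
    rintro c hcP hc ⟨T₀, hT₀⟩
    refine ⟨(sInter_subset_of_mem hT₀).trans (hcP hT₀).1, subset_antisymm ?_ fun x hx => ?_⟩
    · exact (biUnion_subset_biUnion_left (sInter_subset_of_mem hT₀)).trans (hcP hT₀).2.le
    have hmeet : ∀ T ∈ c, (T ∩ {i | i ∈ S₀ ∧ x ∈ U i}).Nonempty := fun T hT => by
      rw [← (hcP hT).2, mem_iUnion₂] at hx
      obtain ⟨i, hiT, hxi⟩ := hx
      exact ⟨i, hiT, (hcP hT).1 hiT, hxi⟩
    obtain ⟨i, hic, -, hxi⟩ := hc.sInter_inter_nonempty ⟨T₀, hT₀⟩ (hfin x hx) hmeet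
    exact mem_biUnion hic hxi
  obtain ⟨S, -, hS⟩ := zorn_superset_nonempty _
    (fun c hcP hc hne => ⟨⋂₀ c, hchain c hcP hc hne, fun _ => sInter_subset_of_mem⟩)
    S₀ ⟨subset_rfl, hS₀⟩
  exact ⟨S, hS⟩

theorem exists_Ioo_subset_union_of_two_lt_ncard {ι R : Type*} [LinearOrder R] {α β : ι → R}
    {F : Set ι} (hF : 2 < F.ncard) {x : R} (hx : ∀ i ∈ F, x ∈ Ioo (α i) (β i)) :
    ∃ c ∈ F, ∃ a ∈ F, ∃ b ∈ F, a ≠ c ∧ b ≠ c ∧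
      Ioo (α c) (β c) ⊆ Ioo (α a) (β a) ∪ Ioo (α b) (β b) := by
  have hFfin : F.Finite := finite_of_ncard_pos (by omega)
  have hFne : F.Nonempty := nonempty_of_ncard_ne_zero (by omega)
  obtain ⟨a, haF, ha⟩ := F.exists_min_image α hFfin hFne
  obtain ⟨b, hbF, hb⟩ := F.exists_max_image β hFfin hFne
  obtain ⟨c, hcF, hcab⟩ : (F \ {a, b}).Nonempty := by
    rw [← ncard_pos (hFfin.sdiff)]
    have := le_ncard_sdiff {a, b} F
    have := ncard_insert_le a {b}
    rw [ncard_singleton] at this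
    omega
  simp only [mem_insert_iff, mem_singleton_iff, not_or] at hcab
  refine ⟨c, hcF, a, haF, b, hbF, Ne.symm hcab.1, Ne.symm hcab.2, fun y ⟨hαy, hyβ⟩ => ?_⟩
  -- `J_a ∪ J_b` is the interval `(α a, β b)`, since both contain `x`.
  by_cases hya : y < β a
  · exact Or.inl ⟨(ha c hcF).trans_lt hαy, hya⟩
  · exact Or.inr ⟨(hx b hbF).1.trans ((hx a haF).2.trans_le (not_lt.1 hya)),
      hyβ.trans_le (hb c hcF)⟩

theorem ncard_setOf_mem_Ioo_le_two_of_minimal {ι R : Type*} [LinearOrder R] {α β : ι → R}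
    {S₀ S : Set ι} {E : Set R}
    (hS : Minimal (fun T => T ⊆ S₀ ∧ ⋃ i ∈ T, Ioo (α i) (β i) = E) S) (x : R) :
    {k | k ∈ S ∧ x ∈ Ioo (α k) (β k)}.ncard ≤ 2 := by
  by_contra! h
  obtain ⟨c, ⟨hcS, -⟩, a, ⟨haS, -⟩, b, ⟨hbS, -⟩, hac, hbc, hsub⟩ :=
    exists_Ioo_subset_union_of_two_lt_ncard h fun i hi => hi.2
  have hcover : ⋃ i ∈ S \ {c}, Ioo (α i) (β i) = E := by
    refine subset_antisymm ((biUnion_subset_biUnion_left sdiff_subset).trans hS.prop.2.le) ?_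
    rw [← hS.prop.2]
    refine iUnion₂_subset fun i hi y hy => ?_
    by_cases hic : i = c
    · rcases hsub (hic ▸ hy) with hy | hy
      · exact mem_biUnion ⟨haS, hac⟩ hy
      · exact mem_biUnion ⟨hbS, hbc⟩ hy
    · exact mem_biUnion ⟨hi, hic⟩ hy
  exact (hS.le_of_le ⟨sdiff_subset.trans hS.prop.1, hcover⟩ sdiff_subset hcS).2 rfl

def maximalIoo {ι R : Type*} [Preorder R] (α β : ι → R) : Set ι :=
  {m | Maximal (· ∈ range fun i => Ioo (α i) (β i)) (Ioo (α m) (β m))}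

section ShrinkingIntervals

variable {ι : Type*} {α β : ι → ℝ} (hlen : Tendsto (fun k => β k - α k) cofinite (𝓝 0))
include hlen

theorem finite_setOf_le_sub {ε : ℝ} (hε : 0 < ε) : {k | ε ≤ β k - α k}.Finite := by
  simpa only [not_lt] using eventually_cofinite.1 (hlen.eventually (gt_mem_nhds hε))

theorem finite_setOf_Ioo_subset {a b : ℝ} (hab : a < b) :
    {k | Ioo a b ⊆ Ioo (α k) (β k)}.Finite :=
  (finite_setOf_le_sub hlen (sub_pos.2 hab)).subset fun k hk => by
    obtain ⟨h₁, h₂⟩ := (Ioo_subset_Ioo_iff hab).1 hk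
    change b - a ≤ β k - α k
    linarith

theorem exists_mem_maximalIoo_Ioo_subset {k : ι} (hk : α k < β k) :
    ∃ m ∈ maximalIoo α β, Ioo (α k) (β k) ⊆ Ioo (α m) (β m) := by
  have hfin : ((fun i => Ioo (α i) (β i)) '' {m | Ioo (α k) (β k) ⊆ Ioo (α m) (β m)}).Finite :=
    (finite_setOf_Ioo_subset hlen hk).image _
  obtain ⟨J, hkJ, hJ⟩ := hfin.exists_le_maximal (mem_image_of_mem _ (subset_refl (Ioo (α k) (β k))))
  obtain ⟨m, -, rfl⟩ := hJ.prop
  refine ⟨m, ⟨mem_range_self m, fun J' hJ' hmJ' => ?_⟩, hkJ⟩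
  obtain ⟨i, rfl⟩ := hJ'
  exact hJ.2 (mem_image_of_mem _ (hkJ.trans hmJ')) hmJ'

theorem finite_setOf_mem_maximalIoo (x : ℝ) :
    {m | m ∈ maximalIoo α β ∧ x ∈ Ioo (α m) (β m)}.Finite := by
  by_contra hinf
  obtain ⟨k, -, hxk⟩ := Set.Infinite.nonempty hinf
  set δ := min (x - α k) (β k - x)
  have hδ : 0 < δ := lt_min (sub_pos.2 hxk.1) (sub_pos.2 hxk.2)
  refine hinf (((finite_setOf_le_sub hlen hδ).union
    (finite_setOf_Ioo_subset hlen (hxk.1.trans hxk.2))).subset fun m ⟨hm, hxm⟩ => ?_)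
  by_cases hmδ : δ ≤ β m - α m
  · exact Or.inl hmδ
  -- A short interval through `x` lies inside `J_k`, so by maximality it contains `J_k`.
  refine Or.inr (hm.2 (mem_range_self k) (Ioo_subset_Ioo ?_ ?_))
  · linarith [min_le_left (x - α k) (β k - x), hxm.2]
  · linarith [min_le_right (x - α k) (β k - x), hxm.1]

theorem biUnion_maximalIoo_eq :
    ⋃ m ∈ maximalIoo α β, Ioo (α m) (β m) = ⋃ k, Ioo (α k) (β k) := by
  refine subset_antisymm (iUnion₂_subset fun m _ => subset_iUnion (fun k => Ioo (α k) (β k)) m) ?_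
  refine iUnion_subset fun k x hx => ?_
  obtain ⟨m, hm, hkm⟩ := exists_mem_maximalIoo_Ioo_subset hlen (hx.1.trans hx.2)
  exact mem_biUnion hm (hkm hx)

end ShrinkingIntervals

theorem interval_covering_multiplicity_two_general (α β : ℕ → ℝ)
    (hlen : Filter.Tendsto (fun k => β k - α k) Filter.atTop (𝓝 0)) :
    ∃ S : Set ℕ, (⋃ k ∈ S, Set.Ioo (α k) (β k)) = (⋃ k, Set.Ioo (α k) (β k)) ∧
      ∀ x ∈ ⋃ k, Set.Ioo (α k) (β k),
        Set.ncard {k : ℕ | k ∈ S ∧ x ∈ Set.Ioo (α k) (β k)} ≤ 2 := by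
  rw [← Nat.cofinite_eq_atTop] at hlen
  obtain ⟨S, hS⟩ := exists_minimal_subcover_of_pointFinite _ (biUnion_maximalIoo_eq hlen)
    fun x _ => finite_setOf_mem_maximalIoo hlen x
  exact ⟨S, hS.prop.2, fun x _ => ncard_setOf_mem_Ioo_le_two_of_minimal hS x⟩

/-- Lemma 5 of the paper, covering lemma. -/
theorem interval_covering_multiplicity_two (α β : ℕ → ℝ) (hαβ : ∀ k, α k < β k)
    (hlen : Filter.Tendsto (fun k => β k - α k) Filter.atTop (𝓝 0)) :
    ∃ S : Set ℕ, (⋃ k ∈ S, Set.Ioo (α k) (β k)) = (⋃ k, Set.Ioo (α k) (β k)) ∧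
      ∀ x ∈ ⋃ k, Set.Ioo (α k) (β k),
        Set.ncard {k : ℕ | k ∈ S ∧ x ∈ Set.Ioo (α k) (β k)} ≤ 2 :=
  interval_covering_multiplicity_two_general α β hlen
end
end

section
/- Let n : [0,1] → ℝ be an increasing function with n(0) = 0 satisfying |n(x) − n(y)| ≤ |x − y| for all x, y ∈ [0,1], and let a ∈ (0,1] be such that liminf_{r→0+} n(r)/r < a. Then for every δ ∈ (0,1), ∫_0^δ (n(r) − underline{n}^a_δ(r))/r² dr = ∞. -/
open Filter MeasureTheory Set Topology

noncomputable section

/-! Every admissible minorant `φ` of `n` on `[0, δ]` has slope at least `a`, so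
`φ r ≤ n t - a (t - r)` for `r ≤ t`. Along points `t → 0⁺` with `n t < A t`, `A < a`, this leaves
`n r - φ r ≥ (a - A) t / 2` for `r ∈ (c t, 2 c t]`, `c = (a - A) / (4 a)`, so the integrand has mass
at least `a / 2` on each of these intervals. Their lengths tend to `0`, which is impossible if the
integral is finite. -/

theorem monotoneOn_sub_mul_of_le_derivWithin {s : Set ℝ} (hs : Convex ℝ s) {φ : ℝ → ℝ} {D : ℝ}
    (hφ : DifferentiableOn ℝ φ s) (hD : ∀ x ∈ s, D ≤ derivWithin φ s x) :
    MonotoneOn (fun x => φ x - D * x) s := by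
  refine monotoneOn_of_hasDerivWithinAt_nonneg hs (f' := fun x => derivWithin φ s x - D)
    (hφ.continuousOn.sub (continuous_const_mul D).continuousOn) (fun x hx => ?_)
    (fun x hx => sub_nonneg.2 (hD x (interior_subset hx)))
  have hφx := (hφ x (interior_subset hx)).hasDerivWithinAt.mono interior_subset
  exact hφx.sub (by simpa using (hasDerivWithinAt_id x (interior s)).const_mul D)

theorem lowerRegOn_Icc_le {n : ℝ → ℝ} {D p q m r t : ℝ} (hD0 : 0 ≤ D) (hD1 : D ≤ 1)
    (hpq : p < q) (hm : ∀ x ∈ Icc p q, m ≤ n x) (hpr : p ≤ r) (hrt : r ≤ t) (htq : t ≤ q) :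
    lowerRegOn n D (Icc p q) r ≤ n t - D * (t - r) := by
  have htI : t ∈ Icc p q := ⟨hpr.trans hrt, htq⟩
  have hrI : r ∈ Icc p q := ⟨hpr, hrt.trans htq⟩
  apply csSup_le
  · refine ⟨m + D * (r - q), fun x => m + D * (x - q), by fun_prop, fun x hx => ?_,
      fun x hx => ?_, rfl⟩
    · nlinarith [hm x hx, hx.2]
    · have hderiv : HasDerivWithinAt (fun x => m + D * (x - q)) D (Icc p q) x := by
        simpa using (((hasDerivAt_id x).sub_const q).const_mul D).const_add m |>.hasDerivWithinAt
      rw [hderiv.derivWithin (uniqueDiffOn_Icc hpq x hx)]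
      exact ⟨le_rfl, hD1⟩
  · rintro y ⟨φ, hφ, hφn, hφ', rfl⟩
    have hmono := monotoneOn_sub_mul_of_le_derivWithin (convex_Icc p q)
      (hφ.differentiableOn one_ne_zero) (fun x hx => (hφ' x hx).1) hrI htI hrt
    have := hφn t htI
    simp only at hmono
    linarith

theorem ofReal_div_le_setLIntegral_Ioc_div_sq {f : ℝ → ℝ} {u K : ℝ} (hu : 0 < u) (hK : 0 ≤ K)
    (hf : ∀ r ∈ Ioc u (2 * u), K ≤ f r) :
    ENNReal.ofReal (K / (4 * u)) ≤ ∫⁻ r in Ioc u (2 * u), ENNReal.ofReal (f r / r ^ 2) := by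
  have hvol : ENNReal.ofReal (K / (4 * u)) =
      ENNReal.ofReal (K / (2 * u) ^ 2) * volume (Ioc u (2 * u)) := by
    rw [Real.volume_Ioc, ← ENNReal.ofReal_mul (by positivity)]
    congr 1
    field_simp
    ring
  rw [hvol, ← setLIntegral_const]
  refine setLIntegral_mono' measurableSet_Ioc fun r hr => ENNReal.ofReal_le_ofReal ?_
  have hr0 : 0 < r := hu.trans hr.1
  calc K / (2 * u) ^ 2 ≤ K / r ^ 2 := by gcongr; exact hr.2
    _ ≤ f r / r ^ 2 := by gcongr; exact hf r hr

theorem ofReal_half_le_setLIntegral_sub_lowerReg {n : ℝ → ℝ} {a δ A t : ℝ} (ha0 : 0 < a)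
    (ha1 : a ≤ 1) (hAa : A < a) (hn : ∀ x ∈ Icc 0 δ, 0 ≤ n x) (ht : t ∈ Ioc 0 δ)
    (hnt : n t < A * t) :
    ENNReal.ofReal (a / 2) ≤ ∫⁻ r in Ioc ((a - A) / (4 * a) * t) (2 * ((a - A) / (4 * a) * t)),
      ENNReal.ofReal ((n r - lowerReg n a δ r) / r ^ 2) := by
  obtain ⟨ht0, htδ⟩ := ht
  have hA0 : 0 < A := pos_of_mul_pos_left ((hn t ⟨ht0.le, htδ⟩).trans_lt hnt) ht0.le
  set u := (a - A) / (4 * a) * t with hu_def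
  have hu : 0 < u := mul_pos (div_pos (sub_pos.2 hAa) (by positivity)) ht0
  have h2u : a * (2 * u) = (a - A) * t / 2 := by
    rw [hu_def]; field_simp; ring
  rw [show a / 2 = (a - A) * t / 2 / (4 * u) by rw [← h2u]; field_simp; ring]
  refine ofReal_div_le_setLIntegral_Ioc_div_sq hu (by nlinarith) fun r hr => ?_
  have hr0 : 0 < r := hu.trans hr.1
  have har : a * r ≤ (a - A) * t / 2 := h2u ▸ mul_le_mul_of_nonneg_left hr.2 ha0.le
  have hrt : r ≤ t := by nlinarith
  have hreg := lowerRegOn_Icc_le ha0.le ha1 (ht0.trans_le htδ) hn hr0.le hrt htδ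
  have := hn r ⟨hr0.le, hrt.trans htδ⟩
  unfold lowerReg
  linarith

theorem tendsto_volume_Ioc_mul_two_mul (c : ℝ) :
    Tendsto (fun t => volume (Ioc (c * t) (2 * (c * t)))) (𝓝[>] 0) (𝓝 0) := by
  simp only [Real.volume_Ioc]
  rw [← ENNReal.ofReal_zero]
  exact ENNReal.tendsto_ofReal
    (tendsto_nhdsWithin_of_tendsto_nhds (Continuous.tendsto' (by fun_prop) _ _ (by ring)))

theorem setLIntegral_eq_top_of_frequently_le {α ι : Type*} [MeasurableSpace α] {μ : Measure α}
    {f : α → ENNReal} {s : Set α} {S : ι → Set α} {l : Filter ι} {ε : ENNReal} (hε : ε ≠ 0)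
    (hS : Tendsto (μ ∘ S) l (𝓝 0)) (hf : ∃ᶠ i in l, S i ⊆ s ∧ ε ≤ ∫⁻ x in S i, f x ∂μ) :
    ∫⁻ x in s, f x ∂μ = ⊤ := by
  by_contra hfin
  have hsmall := (tendsto_setLIntegral_zero hfin (tendsto_of_tendsto_of_tendsto_of_le_of_le
    tendsto_const_nhds hS (fun _ => zero_le) (fun i => Measure.restrict_apply_le s (S i)))).eventually
    (gt_mem_nhds (pos_iff_ne_zero.2 hε))
  obtain ⟨i, ⟨hSs, hle⟩, hlt⟩ := (hf.and_eventually hsmall).exists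
  rw [Measure.restrict_restrict_of_subset hSs] at hlt
  exact hle.not_gt hlt

/-- D₃ is bounded by the lower density quotient. -/
theorem lowerReg_integral_of_liminf_lt (n : ℝ → ℝ)
    (hmono : MonotoneOn n (Set.Icc (0 : ℝ) 1)) (h0 : n 0 = 0)
    (hlip : ∀ x ∈ Set.Icc (0 : ℝ) 1, ∀ y ∈ Set.Icc (0 : ℝ) 1, |n x - n y| ≤ |x - y|)
    (a : ℝ) (ha : a ∈ Set.Ioc (0 : ℝ) 1)
    (hliminf : Filter.liminf (fun r => n r / r) (𝓝[>] (0 : ℝ)) < a)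
    (δ : ℝ) (hδ : δ ∈ Set.Ioo (0 : ℝ) 1) :
    ∫⁻ r in Set.Ioc (0 : ℝ) δ,
      ENNReal.ofReal ((n r - lowerReg n a δ r) / r ^ 2) = ⊤ := by
  obtain ⟨ha0, ha1⟩ := ha
  obtain ⟨hδ0, hδ1⟩ := hδ
  have hn_nonneg : ∀ x ∈ Icc 0 δ, 0 ≤ n x := fun x hx =>
    h0 ▸ hmono (left_mem_Icc.2 zero_le_one) ⟨hx.1, hx.2.trans hδ1.le⟩ hx.1
  have hn_le : ∀ᶠ r in 𝓝[>] 0, n r / r ≤ 1 := by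
    filter_upwards [Ioo_mem_nhdsGT one_pos] with r hr
    have := hlip r ⟨hr.1.le, hr.2.le⟩ 0 ⟨le_rfl, zero_le_one⟩
    rw [h0, sub_zero, sub_zero, abs_of_pos hr.1] at this
    exact (div_le_one hr.1).2 ((le_abs_self _).trans this)
  obtain ⟨A, hLA, hAa⟩ := exists_between (max_lt hliminf ha0)
  have hfreq : ∃ᶠ t in 𝓝[>] 0, n t / t < A := frequently_lt_of_liminf_lt
    (isCoboundedUnder_ge_of_eventually_le _ hn_le) ((le_max_left _ _).trans_lt hLA)
  set c := (a - A) / (4 * a)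
  have hc : 0 < c ∧ 2 * c ≤ 1 := by
    have hA0 : 0 < A := (le_max_right _ _).trans_lt hLA
    refine ⟨div_pos (by linarith) (by positivity), ?_⟩
    rw [mul_div_assoc', div_le_one (by positivity)]
    linarith
  refine setLIntegral_eq_top_of_frequently_le (ENNReal.ofReal_pos.2 (half_pos ha0)).ne'
    (tendsto_volume_Ioc_mul_two_mul c) ?_
  refine (hfreq.and_eventually (Ioo_mem_nhdsGT hδ0)).mono fun t ⟨hnt, ht0, htδ⟩ => ⟨?_, ?_⟩
  · exact fun r hr => ⟨(mul_pos hc.1 ht0).trans hr.1, hr.2.trans (by nlinarith)⟩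
  · exact ofReal_half_le_setLIntegral_sub_lowerReg ha0 ha1 hAa hn_nonneg ⟨ht0, htδ.le⟩
      ((div_lt_iff₀ ht0).1 hnt)
end
end
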